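/- arXiv:0711.2816 — 6 statements merged into one kernel-verified Lean document; each statement's English description precedes it below -/
import Mathlib

section
/- Let $a,b$ be elements of a group $G$ and $p$ an odd prime. Then for all positive integers $m$, $(ab)^{p^m} \equiv a^{p^m} b^{p^m} \pmod{G_{m+2}}$, where $G_{m+2}$ is the $(m+2)$-nd term of the lower $p$-series of $G$. -/
/-- The subgroup generated by `p`-th powers of elements of `H`. -/
def pPowSubgroup (p : ℕ) {G : Type*} [Group G] (H : Subgroup G) : Subgroup G :=
  Subgroup.closure {x : G | ∃ h ∈ H, x = h ^ p}

/-- The lower `p`-series of a group `G`: `lowerPSeries p G i = G_{i+1}`, i.e.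
`lowerPSeries p G 0 = G₁ = G` and `G_{i+1} = G_i^p [G_i, G]`. -/
def lowerPSeries (p : ℕ) (G : Type*) [Group G] : ℕ → Subgroup G
  | 0 => ⊤
  | n + 1 => pPowSubgroup p (lowerPSeries p G n) ⊔ ⁅lowerPSeries p G n, (⊤ : Subgroup G)⁆

open scoped commutatorElement

section Elem
variable {G : Type*} [Group G]

/-- If `⁅h,k⁆` commutes with `h`, then conjugation of `k` by `h^n` multiplies by `⁅h,k⁆^n`. -/
lemma conj_pow_eq (h k : G) (hc : Commute ⁅h, k⁆ h) (n : ℕ) :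
    h ^ n * k * (h ^ n)⁻¹ = ⁅h, k⁆ ^ n * k := by
  induction n with
  | zero => simp
  | succ n ih =>
    have h1 : h * k * h⁻¹ = ⁅h, k⁆ * k := by group
    calc h ^ (n+1) * k * (h ^ (n+1))⁻¹
        = h ^ n * (h * k * h⁻¹) * (h ^ n)⁻¹ := by group
      _ = h ^ n * (⁅h, k⁆ * k) * (h ^ n)⁻¹ := by rw [h1]
      _ = (h ^ n * ⁅h, k⁆ * (h ^ n)⁻¹) * (h ^ n * k * (h ^ n)⁻¹) := by group
      _ = ⁅h, k⁆ * (⁅h, k⁆ ^ n * k) := by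
          rw [ih, (hc.symm.pow_left n).eq]; group
      _ = ⁅h, k⁆ ^ (n+1) * k := by rw [pow_succ']; group

lemma commutatorElement_pow_left (h k : G) (hc : Commute ⁅h, k⁆ h) (n : ℕ) :
    ⁅h ^ n, k⁆ = ⁅h, k⁆ ^ n := by
  have := conj_pow_eq h k hc n
  rw [commutatorElement_def]
  rw [show h ^ n * k * (h ^ n)⁻¹ * k⁻¹ = (h ^ n * k * (h ^ n)⁻¹) * k⁻¹ by group, this]
  group

lemma pow_mul_comm_c (x y : G) (hy : Commute ⁅y, x⁆ y) (n : ℕ) :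
    y ^ n * x = ⁅y, x⁆ ^ n * x * y ^ n := by
  induction n with
  | zero => simp
  | succ n ih =>
    have h1 : y * x = ⁅y, x⁆ * x * y := by group
    calc y ^ (n+1) * x = y * (y ^ n * x) := by group
      _ = y * (⁅y, x⁆ ^ n * x * y ^ n) := by rw [ih]
      _ = (y * ⁅y, x⁆ ^ n) * x * y ^ n := by group
      _ = ⁅y, x⁆ ^ n * (y * x) * y ^ n := by rw [(hy.symm.pow_right n).eq]; group
      _ = ⁅y, x⁆ ^ n * (⁅y, x⁆ * x * y) * y ^ n := by rw [h1]
      _ = ⁅y, x⁆ ^ (n+1) * x * y ^ (n+1) := by rw [pow_succ]; group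

/-- Class-2 style expansion: if `⁅y,x⁆` commutes with `x` and `y` then
`(xy)^n = x^n y^n ⁅y,x⁆^(n choose 2)`. -/
lemma mul_pow_class2 (x y : G) (hx : Commute ⁅y, x⁆ x) (hy : Commute ⁅y, x⁆ y) (n : ℕ) :
    (x * y) ^ n = x ^ n * y ^ n * ⁅y, x⁆ ^ (n.choose 2) := by
  set c := ⁅y, x⁆ with hc
  induction n with
  | zero => simp
  | succ n ih =>
    have hchoose : (n+1).choose 2 = n.choose 2 + n := by
      rw [Nat.choose_succ_succ, Nat.choose_one_right, Nat.add_comm]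
    calc (x * y) ^ (n+1) = (x * y) ^ n * (x * y) := by rw [pow_succ]
      _ = x ^ n * y ^ n * c ^ n.choose 2 * (x * y) := by rw [ih]
      _ = x ^ n * y ^ n * (x * y) * c ^ n.choose 2 := by
          rw [mul_assoc (x ^ n * y ^ n), ((hx.mul_right hy).pow_left (n.choose 2)).eq]; group
      _ = x ^ n * (y ^ n * x) * y * c ^ n.choose 2 := by group
      _ = x ^ n * (c ^ n * x * y ^ n) * y * c ^ n.choose 2 := by rw [pow_mul_comm_c x y hy n]
      _ = (x ^ n * c ^ n) * x * y ^ (n+1) * c ^ n.choose 2 := by rw [pow_succ]; group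
      _ = (c ^ n * x ^ n) * x * y ^ (n+1) * c ^ n.choose 2 := by rw [(hx.pow_pow n n).symm.eq]
      _ = c ^ n * (x ^ (n+1) * y ^ (n+1)) * c ^ n.choose 2 := by rw [pow_succ x n]; group
      _ = x ^ (n+1) * y ^ (n+1) * c ^ n * c ^ n.choose 2 := by
          rw [(((hx.pow_right (n+1)).mul_right (hy.pow_right (n+1))).pow_left n).eq]
      _ = x ^ (n+1) * y ^ (n+1) * c ^ ((n+1).choose 2) := by
          rw [hchoose, pow_add]; group
end Elem
section Subgrp
variable {G : Type*} [Group G]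

open Subgroup

lemma pPow_le {p : ℕ} {H K : Subgroup G} (h : ∀ x ∈ H, x ^ p ∈ K) :
    pPowSubgroup p H ≤ K := by
  apply Subgroup.closure_le _ |>.mpr
  rintro x ⟨y, hy, rfl⟩
  exact h y hy

lemma pPow_mono {p : ℕ} {H K : Subgroup G} (h : H ≤ K) :
    pPowSubgroup p H ≤ pPowSubgroup p K :=
  pPow_le fun x hx => Subgroup.subset_closure ⟨x, h hx, rfl⟩

lemma pPow_le_self {p : ℕ} {H : Subgroup G} : pPowSubgroup p H ≤ H :=
  pPow_le fun x hx => pow_mem hx p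

lemma pow_mem_pPow {p : ℕ} {H : Subgroup G} {x : G} (hx : x ∈ H) :
    x ^ p ∈ pPowSubgroup p H :=
  Subgroup.subset_closure ⟨x, hx, rfl⟩

lemma pPow_normal {p : ℕ} {H : Subgroup G} (hH : H.Normal) : (pPowSubgroup p H).Normal := by
  constructor
  intro n hn g
  induction hn using Subgroup.closure_induction with
  | mem x hx =>
    obtain ⟨h, hh, rfl⟩ := hx
    have : g * h ^ p * g⁻¹ = (g * h * g⁻¹) ^ p := by
      rw [conj_pow]
    rw [this]
    exact Subgroup.subset_closure ⟨g * h * g⁻¹, hH.conj_mem h hh g, rfl⟩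
  | one => simpa using one_mem _
  | mul x y hx hy ihx ihy =>
    have : g * (x * y) * g⁻¹ = (g * x * g⁻¹) * (g * y * g⁻¹) := by group
    rw [this]; exact mul_mem ihx ihy
  | inv x hx ihx =>
    have : g * x⁻¹ * g⁻¹ = (g * x * g⁻¹)⁻¹ := by group
    rw [this]; exact inv_mem ihx

/-- commutator with a sup on the right. -/
lemma commutator_sup_right_le {H A B N : Subgroup G} (hN : N.Normal)
    (hA : ⁅H, A⁆ ≤ N) (hB : ⁅H, B⁆ ≤ N) : ⁅H, A ⊔ B⁆ ≤ N := by
  let K : Subgroup G :=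
    { carrier := { x | ∀ g ∈ H, ⁅g, x⁆ ∈ N }
      one_mem' := by intro g _; rw [commutatorElement_one_right]; exact one_mem N
      mul_mem' := by
        intro x y hx hy g hg
        have : ⁅g, x * y⁆ = ⁅g, x⁆ * (x * ⁅g, y⁆ * x⁻¹) := by group
        rw [this]
        exact mul_mem (hx g hg) (hN.conj_mem _ (hy g hg) x)
      inv_mem' := by
        intro x hx g hg
        have : ⁅g, x⁻¹⁆ = x⁻¹ * ⁅g, x⁆⁻¹ * x := by group
        rw [this]
        simpa using hN.conj_mem _ (inv_mem (hx g hg)) x⁻¹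
    }
  have hAK : A ≤ K := fun a ha g hg => hA (commutator_mem_commutator hg ha)
  have hBK : B ≤ K := fun b hb g hg => hB (commutator_mem_commutator hg hb)
  rw [Subgroup.commutator_le]
  intro g hg x hx
  exact (sup_le hAK hBK) hx g hg

/-- Three subgroups lemma, `≤ N` version. -/
lemma three_subgroups_le {A B C N : Subgroup G} (hN : N.Normal)
    (h1 : ⁅⁅B, C⁆, A⁆ ≤ N) (h2 : ⁅⁅C, A⁆, B⁆ ≤ N) : ⁅⁅A, B⁆, C⁆ ≤ N := by
  haveI := hN
  let π := QuotientGroup.mk' N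
  have key : ∀ {X Y Z : Subgroup G}, ⁅⁅X, Y⁆, Z⁆ ≤ N →
      ⁅⁅X.map π, Y.map π⁆, Z.map π⁆ = ⊥ := by
    intro X Y Z h
    rw [← Subgroup.map_commutator, ← Subgroup.map_commutator, Subgroup.map_eq_bot_iff,
      QuotientGroup.ker_mk']
    exact h
  have h3 := Subgroup.commutator_commutator_eq_bot_of_rotate (key h1) (key h2)
  rw [← Subgroup.map_commutator, ← Subgroup.map_commutator, Subgroup.map_eq_bot_iff,
    QuotientGroup.ker_mk'] at h3
  exact h3

lemma mk_commute {N : Subgroup G} (hN : N.Normal) {g x : G} (h : ⁅g, x⁆ ∈ N) :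
    Commute (g : G ⧸ N) (x : G ⧸ N) := by
  haveI := hN
  rw [← commutatorElement_eq_one_iff_commute]
  have : ((⁅g, x⁆ : G) : G ⧸ N) = ⁅(g : G ⧸ N), (x : G ⧸ N)⁆ :=
    map_commutatorElement (QuotientGroup.mk' N) g x
  rw [← this, QuotientGroup.eq_one_iff]
  exact h

/-- The key p-power commutator containment. -/
lemma pPow_commutator_le {p : ℕ} {H K : Subgroup G} (hH : H.Normal) (hK : K.Normal) :
    ⁅pPowSubgroup p H, K⁆ ≤ pPowSubgroup p ⁅H, K⁆ ⊔ ⁅⁅H, K⁆, H⁆ := by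
  haveI := hH; haveI := hK
  set N := pPowSubgroup p ⁅H, K⁆ ⊔ ⁅⁅H, K⁆, H⁆ with hNdef
  haveI hN : N.Normal := by
    haveI h1 : (pPowSubgroup p ⁅H, K⁆).Normal := pPow_normal inferInstance
    infer_instance
  rw [Subgroup.commutator_le]
  intro x hx k hk
  induction hx using Subgroup.closure_induction with
  | mem x hxm =>
    obtain ⟨h, hh, rfl⟩ := hxm
    rw [← QuotientGroup.eq_one_iff (N := N)]
    have e1 : ((⁅h ^ p, k⁆ : G) : G ⧸ N) = ⁅((h : G) : G ⧸ N) ^ p, ((k : G) : G ⧸ N)⁆ := by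
      have := map_commutatorElement (QuotientGroup.mk' N) (h ^ p) k
      simpa [-map_commutatorElement] using this
    have hcomm : Commute (⁅(h : G ⧸ N), (k : G ⧸ N)⁆) ((h : G ⧸ N)) := by
      have : ((⁅h, k⁆ : G) : G ⧸ N) = ⁅(h : G ⧸ N), (k : G ⧸ N)⁆ :=
        map_commutatorElement (QuotientGroup.mk' N) h k
      rw [← this]
      exact mk_commute hN (Subgroup.mem_sup_right
        (Subgroup.commutator_mem_commutator (Subgroup.commutator_mem_commutator hh hk) hh))
    rw [e1, commutatorElement_pow_left _ _ hcomm]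
    have : (⁅(h : G ⧸ N), (k : G ⧸ N)⁆) = ((⁅h, k⁆ : G) : G ⧸ N) :=
      (map_commutatorElement (QuotientGroup.mk' N) h k).symm
    rw [this]
    rw [← QuotientGroup.mk_pow, QuotientGroup.eq_one_iff]
    exact Subgroup.mem_sup_left (pow_mem_pPow (Subgroup.commutator_mem_commutator hh hk))
  | one => simpa using one_mem N
  | mul x y hx hy ihx ihy =>
    have : ⁅x * y, k⁆ = (x * ⁅y, k⁆ * x⁻¹) * ⁅x, k⁆ := by group
    rw [this]
    exact mul_mem (hN.conj_mem _ ihy x) ihx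
  | inv x hx ihx =>
    have : ⁅x⁻¹, k⁆ = x⁻¹ * ⁅x, k⁆⁻¹ * x := by group
    rw [this]
    simpa using hN.conj_mem _ (inv_mem ihx) x⁻¹
end Subgrp
section Series
variable (p : ℕ) (G : Type*) [Group G]

lemma lowerPSeries_succ (n : ℕ) :
    lowerPSeries p G (n + 1) =
      pPowSubgroup p (lowerPSeries p G n) ⊔ ⁅lowerPSeries p G n, (⊤ : Subgroup G)⁆ := rfl

lemma lowerPSeries_normal : ∀ n, (lowerPSeries p G n).Normal := by
  intro n
  induction n with
  | zero => exact (inferInstance : (⊤ : Subgroup G).Normal)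
  | succ n ih =>
    haveI := ih
    haveI := pPow_normal (p := p) ih
    rw [lowerPSeries_succ]
    infer_instance

lemma lowerPSeries_succ_le (n : ℕ) : lowerPSeries p G (n + 1) ≤ lowerPSeries p G n := by
  haveI := lowerPSeries_normal p G n
  rw [lowerPSeries_succ]
  exact sup_le pPow_le_self (Subgroup.commutator_le_left _ _)

lemma lowerPSeries_antitone {m n : ℕ} (h : m ≤ n) : lowerPSeries p G n ≤ lowerPSeries p G m := by
  induction n with
  | zero => simpa using (Nat.le_zero.mp h) ▸ le_refl _
  | succ n ih =>
    rcases Nat.lt_or_ge m (n + 1) with h' | h'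
    · exact (lowerPSeries_succ_le p G n).trans (ih (Nat.lt_succ_iff.mp h'))
    · have : m = n + 1 := le_antisymm h h'
      rw [this]

variable {G}

lemma pow_mem_lowerPSeries_succ {n : ℕ} {g : G} (hg : g ∈ lowerPSeries p G n) :
    g ^ p ∈ lowerPSeries p G (n + 1) := by
  rw [lowerPSeries_succ]
  exact Subgroup.mem_sup_left (pow_mem_pPow hg)

lemma pow_pow_mem_lowerPSeries (a : G) (m : ℕ) : a ^ (p ^ m) ∈ lowerPSeries p G m := by
  induction m with
  | zero => simp [lowerPSeries]
  | succ m ih =>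
    rw [pow_succ, pow_mul]
    exact pow_mem_lowerPSeries_succ p ih

lemma commutator_mem_lowerPSeries_succ {n : ℕ} {g : G} (hg : g ∈ lowerPSeries p G n) (x : G) :
    ⁅g, x⁆ ∈ lowerPSeries p G (n + 1) := by
  rw [lowerPSeries_succ]
  exact Subgroup.mem_sup_right (Subgroup.commutator_mem_commutator hg (Subgroup.mem_top x))

variable (G)

/-- `⁅G_{i+1}, G_{j+1}⁆ ≤ G_{i+j+2}`, i.e. `⁅L i, L j⁆ ≤ L (i+j+1)`. -/
lemma lowerPSeries_commutator_le :
    ∀ j i : ℕ, ⁅lowerPSeries p G i, lowerPSeries p G j⁆ ≤ lowerPSeries p G (i + j + 1) := by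
  intro j
  induction j with
  | zero =>
    intro i
    rw [show lowerPSeries p G 0 = (⊤ : Subgroup G) from rfl, lowerPSeries_succ]
    exact le_sup_right
  | succ j ih =>
    intro i
    haveI hNi := lowerPSeries_normal p G i
    haveI hNj := lowerPSeries_normal p G j
    haveI hN : (lowerPSeries p G (i + (j + 1) + 1)).Normal := lowerPSeries_normal p G _
    have harith : i + (j + 1) + 1 = (i + j + 1) + 1 := by omega
    rw [lowerPSeries_succ p G j]
    apply commutator_sup_right_le hN
    · -- p-th power part
      rw [Subgroup.commutator_comm]
      refine (pPow_commutator_le hNj hNi).trans (sup_le ?_ ?_)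
      · have h1 : ⁅lowerPSeries p G j, lowerPSeries p G i⁆ ≤ lowerPSeries p G (i + j + 1) := by
          rw [Subgroup.commutator_comm]; exact ih i
        refine (pPow_mono h1).trans ?_
        rw [harith]
        exact (pPow_le (fun x hx => pow_mem_lowerPSeries_succ p hx))
      · have h1 : ⁅⁅lowerPSeries p G j, lowerPSeries p G i⁆, lowerPSeries p G j⁆ ≤
            ⁅lowerPSeries p G (i + j + 1), (⊤ : Subgroup G)⁆ := by
          apply Subgroup.commutator_mono _ le_top
          rw [Subgroup.commutator_comm]; exact ih i
        refine h1.trans ?_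
        rw [harith, lowerPSeries_succ]
        exact le_sup_right
    · -- commutator part, via three subgroups lemma
      rw [Subgroup.commutator_comm]
      apply three_subgroups_le hN
      · -- ⁅⁅⊤, L i⁆, L j⁆ ≤ L (i+j+2)
        have h1 : ⁅(⊤ : Subgroup G), lowerPSeries p G i⁆ ≤ lowerPSeries p G (i + 1) := by
          rw [Subgroup.commutator_comm, lowerPSeries_succ]
          exact le_sup_right
        have h2 : ⁅⁅(⊤ : Subgroup G), lowerPSeries p G i⁆, lowerPSeries p G j⁆ ≤
            ⁅lowerPSeries p G (i + 1), lowerPSeries p G j⁆ :=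
          Subgroup.commutator_mono h1 (le_refl _)
        refine h2.trans ?_
        have := ih (i + 1)
        have harith2 : i + 1 + j + 1 = i + (j + 1) + 1 := by omega
        rwa [harith2] at this
      · -- ⁅⁅L i, L j⁆, ⊤⁆ ≤ L (i+j+2)
        have h1 : ⁅⁅lowerPSeries p G i, lowerPSeries p G j⁆, (⊤ : Subgroup G)⁆ ≤
            ⁅lowerPSeries p G (i + j + 1), (⊤ : Subgroup G)⁆ :=
          Subgroup.commutator_mono (ih i) (le_refl _)
        refine h1.trans ?_
        rw [harith, lowerPSeries_succ]
        exact le_sup_right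
end Series

/-- For an odd prime `p` and `a b : G`, `(ab)^{p^m} ≡ a^{p^m} b^{p^m} (mod G_{m+2})`;
here `G_{m+2} = lowerPSeries p G (m+1)`. -/
theorem stmt_8 (p : ℕ) (hp : p.Prime) (hodd : p ≠ 2) (G : Type*) [Group G]
    (a b : G) (m : ℕ) (hm : 1 ≤ m) :
    (a ^ (p ^ m) * b ^ (p ^ m))⁻¹ * (a * b) ^ (p ^ m) ∈ lowerPSeries p G (m + 1) := by
  induction m, hm using Nat.le_induction with
  | base =>
    -- base case m = 1
    haveI hN := lowerPSeries_normal p G (1 + 1)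
    rw [pow_one, ← QuotientGroup.eq_one_iff (N := lowerPSeries p G (1 + 1))]
    set N := lowerPSeries p G (1 + 1) with hNdef
    have hc1 : ⁅b, a⁆ ∈ lowerPSeries p G 1 := by
      refine commutator_mem_lowerPSeries_succ p ?_ a
      rw [show lowerPSeries p G 0 = (⊤ : Subgroup G) from rfl]
      exact Subgroup.mem_top b
    have hcc : ((⁅b, a⁆ : G) : G ⧸ N) = ⁅(b : G ⧸ N), (a : G ⧸ N)⁆ :=
      map_commutatorElement (QuotientGroup.mk' N) b a
    have hx : Commute ⁅(b : G ⧸ N), (a : G ⧸ N)⁆ (a : G ⧸ N) := by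
      rw [← hcc]
      exact mk_commute hN (commutator_mem_lowerPSeries_succ p hc1 a)
    have hy : Commute ⁅(b : G ⧸ N), (a : G ⧸ N)⁆ (b : G ⧸ N) := by
      rw [← hcc]
      exact mk_commute hN (commutator_mem_lowerPSeries_succ p hc1 b)
    have hcp : (⁅(b : G ⧸ N), (a : G ⧸ N)⁆) ^ p = 1 := by
      rw [← hcc, ← QuotientGroup.mk_pow, QuotientGroup.eq_one_iff]
      exact pow_mem_lowerPSeries_succ p hc1
    obtain ⟨k, hk⟩ := hp.odd_of_ne_two hodd
    have h2 : p.choose 2 = p * k := by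
      rw [Nat.choose_two_right, hk, Nat.add_sub_cancel,
        Nat.mul_div_assoc _ ⟨k, rfl⟩, Nat.mul_div_cancel_left k two_pos]
    have key := mul_pow_class2 (a : G ⧸ N) (b : G ⧸ N) hx hy p
    simp only [QuotientGroup.mk_mul, QuotientGroup.mk_inv, QuotientGroup.mk_pow]
    rw [key, h2, pow_mul, hcp, one_pow, mul_one, inv_mul_cancel]
  | succ m hm ih =>
    haveI hN := lowerPSeries_normal p G (m + 1 + 1)
    rw [← QuotientGroup.eq_one_iff (N := lowerPSeries p G (m + 1 + 1))]
    set N := lowerPSeries p G (m + 1 + 1) with hNdef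
    set z := (a ^ p ^ m * b ^ p ^ m)⁻¹ * (a * b) ^ p ^ m with hz_def
    have hz : z ∈ lowerPSeries p G (m + 1) := ih
    have hG : (a * b) ^ p ^ m = a ^ p ^ m * b ^ p ^ m * z := by rw [hz_def]; group
    have hcz : ∀ x : G, Commute ((z : G ⧸ N)) (x : G ⧸ N) := fun x =>
      mk_commute hN (commutator_mem_lowerPSeries_succ p hz x)
    have hzp : ((z : G ⧸ N)) ^ p = 1 := by
      rw [← QuotientGroup.mk_pow, QuotientGroup.eq_one_iff]
      exact pow_mem_lowerPSeries_succ p hz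
    have hAB : Commute ((a ^ p ^ m : G) : G ⧸ N) ((b ^ p ^ m : G) : G ⧸ N) := by
      apply mk_commute hN
      have h1 := Subgroup.commutator_mem_commutator (pow_pow_mem_lowerPSeries p a m)
        (pow_pow_mem_lowerPSeries p b m)
      have h2 := lowerPSeries_commutator_le p G m m h1
      exact lowerPSeries_antitone p G (by omega : m + 1 + 1 ≤ m + m + 1) h2
    have hkey : ((a : G ⧸ N) * (b : G ⧸ N)) ^ p ^ (m + 1) =
        ((a : G ⧸ N)) ^ p ^ (m + 1) * ((b : G ⧸ N)) ^ p ^ (m + 1) := by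
      calc ((a : G ⧸ N) * (b : G ⧸ N)) ^ p ^ (m + 1)
          = (((a : G ⧸ N) * (b : G ⧸ N)) ^ p ^ m) ^ p := by rw [← pow_mul, ← pow_succ]
        _ = (((a ^ p ^ m : G) : G ⧸ N) * ((b ^ p ^ m : G) : G ⧸ N) * ((z : G ⧸ N))) ^ p := by
            rw [← QuotientGroup.mk_mul, ← QuotientGroup.mk_pow, hG,
              QuotientGroup.mk_mul, QuotientGroup.mk_mul]
        _ = (((a ^ p ^ m : G) : G ⧸ N) * ((b ^ p ^ m : G) : G ⧸ N)) ^ p * ((z : G ⧸ N)) ^ p :=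
            (((hcz _).symm.mul_left (hcz _).symm).mul_pow p)
        _ = ((a ^ p ^ m : G) : G ⧸ N) ^ p * ((b ^ p ^ m : G) : G ⧸ N) ^ p := by
            rw [hzp, mul_one, hAB.mul_pow]
        _ = ((a : G ⧸ N)) ^ p ^ (m + 1) * ((b : G ⧸ N)) ^ p ^ (m + 1) := by
            rw [QuotientGroup.mk_pow, QuotientGroup.mk_pow, ← pow_mul, ← pow_mul, ← pow_succ]
    simp only [QuotientGroup.mk_mul, QuotientGroup.mk_inv, QuotientGroup.mk_pow]
    rw [hkey, inv_mul_cancel]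
end

section
/- Let $a,b$ be elements of a group $G$, and for all positive integers $m$, $(ab)^{2^m} \equiv a^{2^m} b^{2^m} [a,b]^{2^{m-1}} \pmod{G_{m+2}}$, where $G_{m+2}$ is the $(m+2)$-nd term of the lower $2$-series of $G$ and $[a,b] = a^{-1}b^{-1}ab$. -/
open scoped commutatorElement

section Aux
variable {G : Type*} [Group G]

instance pPow_normal_s9 (p : ℕ) (H : Subgroup G) [hH : H.Normal] : (pPowSubgroup p H).Normal := by
  constructor
  intro x hx g
  induction hx using Subgroup.closure_induction with
  | mem z hz =>
      obtain ⟨h, hh, rfl⟩ := hz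
      rw [show g * h ^ p * g⁻¹ = (g * h * g⁻¹) ^ p from by rw [conj_pow]]
      exact Subgroup.subset_closure ⟨g * h * g⁻¹, hH.conj_mem h hh g, rfl⟩
  | one => simpa using one_mem _
  | mul x y hx hy ihx ihy =>
      rw [show g * (x * y) * g⁻¹ = (g * x * g⁻¹) * (g * y * g⁻¹) from by group]
      exact mul_mem ihx ihy
  | inv x hx ihx =>
      rw [show g * x⁻¹ * g⁻¹ = (g * x * g⁻¹)⁻¹ from by group]
      exact inv_mem ihx

theorem lower_normal (p : ℕ) (k : ℕ) : (lowerPSeries p G k).Normal := by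
  induction k with
  | zero => rw [lowerPSeries]; infer_instance
  | succ n ih =>
      rw [lowerPSeries]
      exact @Subgroup.sup_normal _ _ _ _ (@pPow_normal_s9 _ _ p _ ih)
        (@Subgroup.commutator_normal _ _ _ _ ih inferInstance)

instance (p k : ℕ) : (lowerPSeries p G k).Normal := lower_normal p k

theorem sq_mem {k : ℕ} {x : G} (hx : x ∈ lowerPSeries 2 G k) :
    x ^ 2 ∈ lowerPSeries 2 G (k + 1) := by
  rw [lowerPSeries]
  exact Subgroup.mem_sup_left (Subgroup.subset_closure ⟨x, hx, rfl⟩)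

theorem comm_mem {k : ℕ} {x : G} (hx : x ∈ lowerPSeries 2 G k) (g : G) :
    ⁅x, g⁆ ∈ lowerPSeries 2 G (k + 1) := by
  rw [lowerPSeries]
  exact Subgroup.mem_sup_right (Subgroup.commutator_mem_commutator hx (Subgroup.mem_top g))

theorem lower_succ_le (k : ℕ) : lowerPSeries 2 G (k + 1) ≤ lowerPSeries 2 G k := by
  conv_lhs => rw [lowerPSeries]
  apply sup_le
  · rw [pPowSubgroup, Subgroup.closure_le]
    rintro x ⟨h, hh, rfl⟩; exact pow_mem hh 2
  · exact Subgroup.commutator_le_left _ _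

theorem lower_anti : Antitone (lowerPSeries 2 G) := antitone_nat_of_succ_le lower_succ_le

theorem mem_lower_zero (x : G) : x ∈ lowerPSeries 2 G 0 := by
  rw [lowerPSeries]; trivial

theorem pow_pow_mem {i : ℕ} {x : G} (hx : x ∈ lowerPSeries 2 G i) (k : ℕ) :
    x ^ 2 ^ k ∈ lowerPSeries 2 G (i + k) := by
  induction k with
  | zero => simpa using hx
  | succ n ih =>
      rw [pow_succ, pow_mul]
      exact sq_mem ih

theorem comm_sq {j : ℕ} {x z : G} (h : ⁅x, z⁆ ∈ lowerPSeries 2 G j) :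
    ⁅x, z ^ 2⁆ ∈ lowerPSeries 2 G (j + 1) := by
  have e : ⁅x, z ^ 2⁆ = ⁅x, z⁆ ^ 2 * ⁅⁅x, z⁆⁻¹, z⁆ := by
    simp only [commutatorElement_def, pow_two]; group
  rw [e]
  exact mul_mem (sq_mem h) (comm_mem (inv_mem h) z)

theorem comm_pow2 {i : ℕ} {x : G} (hx : x ∈ lowerPSeries 2 G i) (y : G) (k : ℕ) :
    ⁅x, y ^ 2 ^ k⁆ ∈ lowerPSeries 2 G (i + 1 + k) := by
  induction k with
  | zero => simpa using comm_mem hx y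
  | succ n ih =>
      rw [pow_succ, pow_mul]
      exact comm_sq ih

end Aux


set_option maxHeartbeats 1000000 in
theorem key (G : Type*) [Group G] (a b : G) (n : ℕ) :
    (a ^ 2 ^ (n + 1) * b ^ 2 ^ (n + 1) * ⁅a, b⁆ ^ 2 ^ n)⁻¹ * (a * b) ^ 2 ^ (n + 1) ∈
      lowerPSeries 2 G (n + 2) := by
  induction n with
  | zero =>
    have hc : ⁅a, b⁆ ∈ lowerPSeries 2 G 1 := comm_mem (k := 0) (mem_lower_zero a) b
    have h2 : (⁅a, b⁆⁻¹) ^ 2 ∈ lowerPSeries 2 G 2 := sq_mem (inv_mem hc)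
    have h3 : ⁅⁅a, b⁆, (a * b ^ 2)⁻¹⁆ ∈ lowerPSeries 2 G 2 := comm_mem hc _
    have e : (a ^ 2 ^ (0 + 1) * b ^ 2 ^ (0 + 1) * ⁅a, b⁆ ^ 2 ^ 0)⁻¹ * (a * b) ^ 2 ^ (0 + 1)
        = (⁅a, b⁆⁻¹) ^ 2 * ⁅⁅a, b⁆, (a * b ^ 2)⁻¹⁆ := by
      norm_num
      simp only [commutatorElement_def, pow_two]
      group
    rw [e]
    exact mul_mem h2 h3
  | succ n ih =>
    have hcP : ⁅a, b⁆ ∈ lowerPSeries 2 G 1 := comm_mem (k := 0) (mem_lower_zero a) b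
    have haP : a ^ 2 ^ (n + 1) ∈ lowerPSeries 2 G (n + 1) := by
      simpa using pow_pow_mem (i := 0) (mem_lower_zero a) (n + 1)
    have hbP : b ^ 2 ^ (n + 1) ∈ lowerPSeries 2 G (n + 1) := by
      simpa using pow_pow_mem (i := 0) (mem_lower_zero b) (n + 1)
    have hCP : ⁅a, b⁆ ^ 2 ^ n ∈ lowerPSeries 2 G (n + 1) := by
      simpa [Nat.add_comm] using pow_pow_mem hcP n
    have hmono : lowerPSeries 2 G (n + 1 + 1 + (n + 1)) ≤ lowerPSeries 2 G (n + 3) :=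
      lower_anti (by omega)
    have hAB : ⁅a ^ 2 ^ (n + 1), b ^ 2 ^ (n + 1)⁆ ∈ lowerPSeries 2 G (n + 3) :=
      hmono (comm_pow2 haP b (n + 1))
    have hCA : ⁅⁅a, b⁆ ^ 2 ^ n, a ^ 2 ^ (n + 1)⁆ ∈ lowerPSeries 2 G (n + 3) :=
      hmono (comm_pow2 hCP a (n + 1))
    have hCB : ⁅⁅a, b⁆ ^ 2 ^ n, b ^ 2 ^ (n + 1)⁆ ∈ lowerPSeries 2 G (n + 3) :=
      hmono (comm_pow2 hCP b (n + 1))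
    have hg2 : ((a ^ 2 ^ (n + 1) * b ^ 2 ^ (n + 1) * ⁅a, b⁆ ^ 2 ^ n)⁻¹ * (a * b) ^ 2 ^ (n + 1)) ^ 2
        ∈ lowerPSeries 2 G (n + 3) := sq_mem ih
    have hgc : ⁅(a ^ 2 ^ (n + 1) * b ^ 2 ^ (n + 1) * ⁅a, b⁆ ^ 2 ^ n)⁻¹ * (a * b) ^ 2 ^ (n + 1),
        a ^ 2 ^ (n + 1) * b ^ 2 ^ (n + 1) * ⁅a, b⁆ ^ 2 ^ n⁆ ∈ lowerPSeries 2 G (n + 3) :=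
      comm_mem ih _
    rw [← QuotientGroup.eq]
    let f := QuotientGroup.mk' (lowerPSeries 2 G (n + 1 + 2))
    have hone : ∀ {x : G}, x ∈ lowerPSeries 2 G (n + 3) → f x = 1 := fun h =>
      (QuotientGroup.eq_one_iff _).mpr h
    have hAB' : Commute (f (a ^ 2 ^ (n + 1))) (f (b ^ 2 ^ (n + 1))) :=
      commutatorElement_eq_one_iff_commute.mp (by rw [← map_commutatorElement]; exact hone hAB)
    have hCA' : Commute (f (⁅a, b⁆ ^ 2 ^ n)) (f (a ^ 2 ^ (n + 1))) :=
      commutatorElement_eq_one_iff_commute.mp (by rw [← map_commutatorElement]; exact hone hCA)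
    have hCB' : Commute (f (⁅a, b⁆ ^ 2 ^ n)) (f (b ^ 2 ^ (n + 1))) :=
      commutatorElement_eq_one_iff_commute.mp (by rw [← map_commutatorElement]; exact hone hCB)
    have hg2' : (f ((a ^ 2 ^ (n + 1) * b ^ 2 ^ (n + 1) * ⁅a, b⁆ ^ 2 ^ n)⁻¹ * (a * b) ^ 2 ^ (n + 1))) ^ 2 = 1 := by
      rw [← map_pow]; exact hone hg2
    have hgc' : Commute
        (f (a ^ 2 ^ (n + 1) * b ^ 2 ^ (n + 1) * ⁅a, b⁆ ^ 2 ^ n))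
        (f ((a ^ 2 ^ (n + 1) * b ^ 2 ^ (n + 1) * ⁅a, b⁆ ^ 2 ^ n)⁻¹ * (a * b) ^ 2 ^ (n + 1))) :=
      (commutatorElement_eq_one_iff_commute.mp
        (by rw [← map_commutatorElement]; exact hone hgc)).symm
    have h1 : Commute (f (a ^ 2 ^ (n + 1)) * f (b ^ 2 ^ (n + 1))) (f (⁅a, b⁆ ^ 2 ^ n)) :=
      Commute.mul_left hCA'.symm hCB'.symm
    have hABCg : (a ^ 2 ^ (n + 1) * b ^ 2 ^ (n + 1) * ⁅a, b⁆ ^ 2 ^ n) *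
        ((a ^ 2 ^ (n + 1) * b ^ 2 ^ (n + 1) * ⁅a, b⁆ ^ 2 ^ n)⁻¹ * (a * b) ^ 2 ^ (n + 1))
        = (a * b) ^ 2 ^ (n + 1) := by group
    have ea : a ^ 2 ^ (n + 1 + 1) = (a ^ 2 ^ (n + 1)) ^ 2 := by rw [← pow_mul, ← pow_succ]
    have eb : b ^ 2 ^ (n + 1 + 1) = (b ^ 2 ^ (n + 1)) ^ 2 := by rw [← pow_mul, ← pow_succ]
    have ec : ⁅a, b⁆ ^ 2 ^ (n + 1) = (⁅a, b⁆ ^ 2 ^ n) ^ 2 := by rw [← pow_mul, ← pow_succ]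
    have eab : (a * b) ^ 2 ^ (n + 1 + 1) = ((a * b) ^ 2 ^ (n + 1)) ^ 2 := by
      rw [← pow_mul, ← pow_succ]
    show f (a ^ 2 ^ (n + 1 + 1) * b ^ 2 ^ (n + 1 + 1) * ⁅a, b⁆ ^ 2 ^ (n + 1)) =
      f ((a * b) ^ 2 ^ (n + 1 + 1))
    rw [ea, eb, ec, eab]
    calc f ((a ^ 2 ^ (n + 1)) ^ 2 * (b ^ 2 ^ (n + 1)) ^ 2 * (⁅a, b⁆ ^ 2 ^ n) ^ 2)
        = (f (a ^ 2 ^ (n + 1))) ^ 2 * (f (b ^ 2 ^ (n + 1))) ^ 2 * (f (⁅a, b⁆ ^ 2 ^ n)) ^ 2 := by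
          simp [map_mul, map_pow]
      _ = ((f (a ^ 2 ^ (n + 1)) * f (b ^ 2 ^ (n + 1))) * f (⁅a, b⁆ ^ 2 ^ n)) ^ 2 := by
          rw [h1.mul_pow, hAB'.mul_pow]
      _ = (f (a ^ 2 ^ (n + 1) * b ^ 2 ^ (n + 1) * ⁅a, b⁆ ^ 2 ^ n)) ^ 2 := by
          rw [map_mul, map_mul]
      _ = (f (a ^ 2 ^ (n + 1) * b ^ 2 ^ (n + 1) * ⁅a, b⁆ ^ 2 ^ n)) ^ 2 *
          (f ((a ^ 2 ^ (n + 1) * b ^ 2 ^ (n + 1) * ⁅a, b⁆ ^ 2 ^ n)⁻¹ * (a * b) ^ 2 ^ (n + 1))) ^ 2 := by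
          rw [hg2', mul_one]
      _ = (f (a ^ 2 ^ (n + 1) * b ^ 2 ^ (n + 1) * ⁅a, b⁆ ^ 2 ^ n) *
          f ((a ^ 2 ^ (n + 1) * b ^ 2 ^ (n + 1) * ⁅a, b⁆ ^ 2 ^ n)⁻¹ * (a * b) ^ 2 ^ (n + 1))) ^ 2 :=
          (hgc'.mul_pow 2).symm
      _ = (f ((a * b) ^ 2 ^ (n + 1))) ^ 2 := by rw [← map_mul, hABCg]
      _ = f (((a * b) ^ 2 ^ (n + 1)) ^ 2) := by simp [map_pow]

/-- For `p = 2` and `a b : G`,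
`(ab)^{2^m} ≡ a^{2^m} b^{2^m} [a,b]^{2^{m-1}} (mod G_{m+2})`;
here `G_{m+2} = lowerPSeries 2 G (m+1)` and `⁅a,b⁆ = a⁻¹b⁻¹ab`. -/
theorem stmt_9 (G : Type*) [Group G] (a b : G) (m : ℕ) (hm : 1 ≤ m) :
    (a ^ (2 ^ m) * b ^ (2 ^ m) * ⁅a, b⁆ ^ (2 ^ (m - 1)))⁻¹ * (a * b) ^ (2 ^ m) ∈
      lowerPSeries 2 G (m + 1) := by

  obtain ⟨n, rfl⟩ : ∃ n, m = n + 1 := ⟨m - 1, (Nat.succ_pred_eq_of_pos hm).symm⟩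
  simpa using key G a b n
end

section
/- Let $G$ be a group, $p$ an odd prime, $i$ a positive integer, and suppose $a \in \gamma_i(G)$ (the $i$-th term of the lower central series). Then for all positive integers $m$, $[a^{p^m}, b] \equiv [a,b]^{p^m} \pmod{G_{m+i+2}}$, where $G_{m+i+2}$ is the $(m+i+2)$-nd term of the lower $p$-series. -/
open scoped commutatorElement

section Aux

variable (p : ℕ) {G : Type*} [Group G]

lemma aux_pow_mem_succ {n : ℕ} {x : G} (hx : x ∈ lowerPSeries p G n) :
    x ^ p ∈ lowerPSeries p G (n + 1) := by
  apply le_sup_left (a := pPowSubgroup p (lowerPSeries p G n))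
  exact Subgroup.subset_closure ⟨x, hx, rfl⟩

lemma aux_comm_mem_succ {n : ℕ} {x : G} (hx : x ∈ lowerPSeries p G n) (g : G) :
    ⁅x, g⁆ ∈ lowerPSeries p G (n + 1) := by
  apply le_sup_right (b := ⁅lowerPSeries p G n, (⊤ : Subgroup G)⁆)
  exact Subgroup.commutator_mem_commutator hx (Subgroup.mem_top g)

lemma aux_lcs_le (n : ℕ) : Subgroup.lowerCentralSeries (⊤ : Subgroup G) n ≤ lowerPSeries p G n := by
  induction n with
  | zero => exact le_top
  | succ n ih =>
    show ⁅Subgroup.lowerCentralSeries (⊤ : Subgroup G) n, (⊤ : Subgroup G)⁆ ≤ _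
    intro x hx
    refine Subgroup.commutator_le.mpr (fun g hg h _ => ?_) hx
    exact aux_comm_mem_succ p (ih hg) h

lemma aux_pPow_normal (H : Subgroup G) (hH : H.Normal) : (pPowSubgroup p H).Normal := by
  constructor
  intro x hx g
  have hsub : (MulAut.conj g).toMonoidHom '' {x : G | ∃ h ∈ H, x = h ^ p}
      ⊆ {x : G | ∃ h ∈ H, x = h ^ p} := by
    rintro _ ⟨_, ⟨h, hh, rfl⟩, rfl⟩
    exact ⟨g * h * g⁻¹, hH.conj_mem h hh g, by simp [MulAut.conj]⟩
  have h2 : Subgroup.map (MulAut.conj g).toMonoidHom (pPowSubgroup p H) ≤ pPowSubgroup p H := by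
    rw [pPowSubgroup, MonoidHom.map_closure]
    exact Subgroup.closure_mono hsub
  have := h2 (Subgroup.mem_map_of_mem _ hx)
  simpa [MulAut.conj] using this

lemma aux_lps_normal (n : ℕ) : (lowerPSeries p G n).Normal := by
  induction n with
  | zero => exact (⊤ : Subgroup G).normal_of_characteristic
  | succ n ih =>
    haveI := ih
    haveI := aux_pPow_normal p (lowerPSeries p G n) ih
    show (pPowSubgroup p (lowerPSeries p G n) ⊔ ⁅lowerPSeries p G n, (⊤ : Subgroup G)⁆).Normal
    infer_instance

lemma aux_pow_pow_mem {n : ℕ} {x : G} (hx : x ∈ lowerPSeries p G n) (k : ℕ) :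
    x ^ (p ^ k) ∈ lowerPSeries p G (n + k) := by
  induction k with
  | zero => simpa using hx
  | succ k ih =>
    rw [pow_succ, pow_mul]
    exact aux_pow_mem_succ p ih

/-- expansion of a commutator with product on the left:
`⁅w*x, y⁆ = w * ⁅x,y⁆ * w⁻¹ * ⁅w,y⁆` (Mathlib convention `⁅g,h⁆ = g*h*g⁻¹*h⁻¹`). -/
lemma aux_comm_mul_left {Q : Type*} [Group Q] (w x y : Q) :
    ⁅w * x, y⁆ = w * ⁅x, y⁆ * w⁻¹ * ⁅w, y⁆ := by
  simp only [commutatorElement_def]; group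

lemma aux_conj_central {Q : Type*} [Group Q] {z : Q} (hz : z ∈ Subgroup.center Q) (g : Q) :
    g * z * g⁻¹ = z := by
  rw [Subgroup.mem_center_iff.mp hz g, mul_inv_cancel_right]

/-- If `e := ⁅x, c⁆` is central then `⁅x^n, c⁆ = e^n`. -/
lemma aux_comm_pow_left {Q : Type*} [Group Q] (x c : Q)
    (he : ⁅x, c⁆ ∈ Subgroup.center Q) (n : ℕ) : ⁅x ^ n, c⁆ = ⁅x, c⁆ ^ n := by
  induction n with
  | zero => simp
  | succ n ih =>
    rw [pow_succ, aux_comm_mul_left, ih, aux_conj_central he, pow_succ']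

/-- Key collection identity: if `e := ⁅x, ⁅x,y⁆⁆` is central then
`⁅x^n, y⁆ = ⁅x,y⁆^n * e^(n.choose 2)`. -/
lemma aux_key {Q : Type*} [Group Q] (x y : Q)
    (he : ⁅x, ⁅x, y⁆⁆ ∈ Subgroup.center Q) (n : ℕ) :
    ⁅x ^ n, y⁆ = ⁅x, y⁆ ^ n * ⁅x, ⁅x, y⁆⁆ ^ (n.choose 2) := by
  set c := ⁅x, y⁆ with hc
  set e := ⁅x, c⁆ with hedef
  have hcent : ∀ g : Q, ∀ k : ℕ, g * e ^ k = e ^ k * g := fun g k =>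
    Subgroup.mem_center_iff.mp ((Subgroup.center Q).pow_mem he k) g
  induction n with
  | zero => simp
  | succ n ih =>
    rw [pow_succ (a := x), aux_comm_mul_left, ← hc, ih]
    have h1 : x ^ n * c * (x ^ n)⁻¹ = ⁅x ^ n, c⁆ * c := by
      simp only [commutatorElement_def]; group
    rw [h1, aux_comm_pow_left x c he, ← hedef]
    have hch : (n + 1).choose 2 = n.choose 2 + n := by
      rw [Nat.choose_succ_succ, Nat.choose_one_right, Nat.add_comm]
    have h2 : e ^ n * c = c * e ^ n := (hcent c n).symm
    have h3 : e ^ n * c ^ n = c ^ n * e ^ n := (hcent (c ^ n) n).symm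
    rw [hch]
    calc e ^ n * c * (c ^ n * e ^ n.choose 2)
        = c * (e ^ n * c ^ n) * e ^ n.choose 2 := by rw [h2]; group
      _ = c * c ^ n * (e ^ n * e ^ n.choose 2) := by rw [h3]; group
      _ = c ^ (n + 1) * e ^ (n.choose 2 + n) := by
          rw [← pow_succ' c, ← pow_add, Nat.add_comm n (n.choose 2)]

end Aux

/-- For an odd prime `p`, if `a ∈ γ_{i+1}(G) = lowerCentralSeries G i`, then for all
`m ≥ 1`, `[a^{p^m}, b] ≡ [a,b]^{p^m} (mod G_{m+(i+1)+2})`; here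
`G_{m+(i+1)+2} = lowerPSeries p G (m+i+2)`. -/
theorem stmt_10 (p : ℕ) (hp : p.Prime) (hodd : p ≠ 2) (G : Type*) [Group G]
    (i : ℕ) (a b : G) (ha : a ∈ Subgroup.lowerCentralSeries (⊤ : Subgroup G) i) (m : ℕ) (hm : 1 ≤ m) :
    (⁅a, b⁆ ^ (p ^ m))⁻¹ * ⁅a ^ (p ^ m), b⁆ ∈ lowerPSeries p G (m + i + 2) := by
  clear hm
  induction m with
  | zero =>
    simp only [pow_zero, pow_one, inv_mul_cancel]
    exact Subgroup.one_mem _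
  | succ m ih =>
    -- Work modulo N = lowerPSeries p G (m + i + 3).
    set N := lowerPSeries p G (m + 1 + i + 2) with hN
    have hNlvl : m + 1 + i + 2 = (m + i + 2) + 1 := by omega
    haveI : N.Normal := aux_lps_normal p _
    -- elements of level m+i+2 are central with trivial p-th power in the quotient
    have hcent : ∀ z : G, z ∈ lowerPSeries p G (m + i + 2) →
        ((z : G ⧸ N) ∈ Subgroup.center (G ⧸ N) ∧ (z : G ⧸ N) ^ p = 1) := by
      intro z hz
      constructor
      · rw [Subgroup.mem_center_iff]
        intro q
        induction q using QuotientGroup.induction_on with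
        | H g =>
          show ((g * z : G) : G ⧸ N) = ((z * g : G) : G ⧸ N)
          rw [QuotientGroup.eq]
          have h1 : (g * z)⁻¹ * (z * g) = ⁅z⁻¹, g⁻¹⁆ := by
            simp only [commutatorElement_def]; group
          rw [h1, hN, hNlvl]
          exact aux_comm_mem_succ p ((lowerPSeries p G (m + i + 2)).inv_mem hz) g⁻¹
      · rw [← QuotientGroup.mk_pow, QuotientGroup.eq_one_iff, hN, hNlvl]
        exact aux_pow_mem_succ p hz
    -- set up names
    set x := a ^ (p ^ m) with hx
    have hxmem : x ∈ lowerPSeries p G (m + i) := by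
      have h1 : a ∈ lowerPSeries p G i := aux_lcs_le p i ha
      have h2 := aux_pow_pow_mem p h1 m
      rwa [Nat.add_comm i m] at h2
    have hxbmem : ⁅x, b⁆ ∈ lowerPSeries p G (m + i + 1) := aux_comm_mem_succ p hxmem b
    have hemem : ⁅x, ⁅x, b⁆⁆ ∈ lowerPSeries p G (m + i + 2) := by
      have := aux_comm_mem_succ p hxbmem x
      rw [← commutatorElement_inv] at this
      exact (inv_mem_iff).mp this
    -- IH as an equation in G
    set u := (⁅a, b⁆ ^ (p ^ m))⁻¹ * ⁅a ^ (p ^ m), b⁆ with hu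
    have humem : u ∈ lowerPSeries p G (m + i + 2) := ih
    have hueq : ⁅x, b⁆ = ⁅a, b⁆ ^ (p ^ m) * u := by rw [hu, hx]; group
    -- move to quotient
    rw [← QuotientGroup.eq (s := N)]
    set A : G ⧸ N := ((a : G) : G ⧸ N) with hA
    set B : G ⧸ N := ((b : G) : G ⧸ N) with hB
    have hxq : ((x : G) : G ⧸ N) = A ^ (p ^ m) := by rw [hx]; push_cast; rfl
    have hcq : ((⁅x, b⁆ : G) : G ⧸ N) = ⁅A ^ (p ^ m), B⁆ := by
      rw [← hxq]; exact map_commutatorElement (QuotientGroup.mk' N) x b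
    have heq : ((⁅x, ⁅x, b⁆⁆ : G) : G ⧸ N) = ⁅A ^ (p ^ m), ⁅A ^ (p ^ m), B⁆⁆ := by
      rw [← hcq, ← hxq]
      exact map_commutatorElement (QuotientGroup.mk' N) x ⁅x, b⁆
    obtain ⟨hE, hEp⟩ := hcent _ hemem
    rw [heq] at hE hEp
    obtain ⟨hU, hUp⟩ := hcent _ humem
    -- the key identity with n = p
    have hkey := aux_key (A ^ (p ^ m)) B hE p
    -- p divides p.choose 2 since p is odd
    have hdvd : p ∣ p.choose 2 := by
      have hodd' : Odd p := hp.odd_of_ne_two hodd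
      obtain ⟨k, hk⟩ := hodd'
      rw [Nat.choose_two_right, hk]
      refine ⟨k, ?_⟩
      have h2 : 2 * k + 1 - 1 = k * 2 := by omega
      rw [h2, ← mul_assoc, Nat.mul_div_cancel _ (by norm_num : (0:ℕ) < 2)]
    obtain ⟨k, hk⟩ := hdvd
    have hE2 : ⁅A ^ (p ^ m), ⁅A ^ (p ^ m), B⁆⁆ ^ (p.choose 2) = 1 := by
      rw [hk, pow_mul, hEp, one_pow]
    rw [hE2, mul_one] at hkey
    -- the commutator of x with b in the quotient, via the IH
    have hAB : ((⁅a, b⁆ : G) : G ⧸ N) = ⁅A, B⁆ := map_commutatorElement (QuotientGroup.mk' N) a b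
    have hcomm : ⁅A ^ (p ^ m), B⁆ = ⁅A, B⁆ ^ (p ^ m) * ((u : G) : G ⧸ N) := by
      rw [← hcq, hueq, QuotientGroup.mk_mul, QuotientGroup.mk_pow, hAB]
    -- assemble
    show ((⁅a, b⁆ ^ p ^ (m + 1) : G) : G ⧸ N) = ((⁅a ^ p ^ (m + 1), b⁆ : G) : G ⧸ N)
    have hrhs : ((⁅a ^ p ^ (m + 1), b⁆ : G) : G ⧸ N) = ⁅(A ^ (p ^ m)) ^ p, B⁆ :=
      calc ((⁅a ^ p ^ (m + 1), b⁆ : G) : G ⧸ N)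
          = ⁅((a ^ p ^ (m + 1) : G) : G ⧸ N), B⁆ :=
            map_commutatorElement (QuotientGroup.mk' N) _ b
        _ = ⁅(A ^ (p ^ m)) ^ p, B⁆ := by
            congr 1
            rw [QuotientGroup.mk_pow, ← pow_mul, ← pow_succ]
    rw [hrhs, hkey, hcomm]
    have hcommute : Commute (⁅A, B⁆ ^ (p ^ m)) ((u : G) : G ⧸ N) :=
      Subgroup.mem_center_iff.mp hU _
    rw [hcommute.mul_pow, hUp, mul_one, ← pow_mul, ← pow_succ,
      QuotientGroup.mk_pow, hAB]
end

section
/- Let $w$ be a Lyndon word over an ordered alphabet. Then the right standard bracketing $b[w]$, expanded in the free associative algebra over a field $K$, equals $w$ plus a $K$-linear combination of words lexicographically greater than $w$. -/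
/-- A word `w` over an ordered alphabet is a Lyndon word if it is nonempty and
lexicographically strictly smaller than all of its proper non-trivial tails. -/
def IsLyndon {α : Type*} [LinearOrder α] (w : List α) : Prop :=
  w ≠ [] ∧ ∀ u v : List α, w = u ++ v → u ≠ [] → v ≠ [] → List.Lex (· < ·) w v

/-- The monomial in the monoid algebra `K⟨x_1,…,x_d⟩` corresponding to a word. -/
noncomputable def wordMonomial (K : Type*) [Field K] {d : ℕ} (w : List (Fin d)) :
    MonoidAlgebra K (FreeMonoid (Fin d)) :=
  MonoidAlgebra.single (FreeMonoid.ofList w) 1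

namespace Stmt11Aux

open List

variable {α : Type*} [LinearOrder α]

lemma lex_trans {a b c : List α} (h1 : List.Lex (·<·) a b) (h2 : List.Lex (·<·) b c) :
    List.Lex (·<·) a c := lt_trans (α := List α) h1 h2

lemma lex_asymm {a b : List α} (h : List.Lex (·<·) a b) : ¬ List.Lex (·<·) b a :=
  lt_asymm (α := List α) h

lemma lex_irrefl (a : List α) : ¬ List.Lex (·<·) a a := lt_irrefl (α := List α) a

lemma lex_strip : ∀ (a : List α) {c d : List α},
    List.Lex (·<·) (a ++ c) (a ++ d) → List.Lex (·<·) c d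
  | [], _, _, h => h
  | x :: a, c, d, h => by
      rw [cons_append, cons_append, List.lex_cons_iff] at h
      exact lex_strip a h

lemma lex_append_of_eqlen : ∀ {a b : List α}, List.Lex (·<·) a b → a.length = b.length →
    ∀ c d : List α, List.Lex (·<·) (a ++ c) (b ++ d)
  | _, _, List.Lex.nil, hl => by simp at hl
  | _, _, List.Lex.rel h, _ => fun _ _ => List.Lex.rel h
  | _, _, List.Lex.cons h, hl => fun c d =>
      List.Lex.cons (lex_append_of_eqlen h (by simpa using hl) c d)

lemma lex_append_right_of_le : ∀ {a b : List α}, List.Lex (·<·) a b → b.length ≤ a.length →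
    ∀ c : List α, List.Lex (·<·) a (b ++ c)
  | _, _, List.Lex.nil, hl => by simp at hl
  | _, _, List.Lex.rel h, _ => fun _ => List.Lex.rel h
  | _, _, List.Lex.cons h, hl => fun c =>
      List.Lex.cons (lex_append_right_of_le h (by simpa using hl) c)

lemma lex_cases : ∀ {a b : List α}, List.Lex (·<·) a b →
    (a <+: b) ∨ ∀ c d : List α, List.Lex (·<·) (a ++ c) (b ++ d)
  | _, _, List.Lex.nil => Or.inl nil_prefix
  | _, _, List.Lex.rel h => Or.inr fun _ _ => List.Lex.rel h
  | _, _, @List.Lex.cons _ _ _ _ _ h =>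
      (lex_cases h).imp (fun hp => (cons_prefix_cons).2 ⟨rfl, hp⟩)
        (fun h' c d => List.Lex.cons (h' c d))

omit [LinearOrder α] in
lemma suffix_of_suffix_length_le {a b c : List α} (h1 : a <:+ c) (h2 : b <:+ c)
    (hl : a.length ≤ b.length) : a <:+ b := by
  rw [← List.reverse_prefix] at h1 h2 ⊢
  exact List.prefix_of_prefix_length_le h1 h2 (by simpa using hl)

/-- Existence of the lexicographically least proper nonempty suffix. -/
lemma exists_min_suffix {w : List α} (h2 : 2 ≤ w.length) :
    ∃ w₂ : List α, w₂ <:+ w ∧ w₂ ≠ [] ∧ w₂ ≠ w ∧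
      ∀ v, v <:+ w → v ≠ [] → v ≠ w → w₂ = v ∨ List.Lex (·<·) w₂ v := by
  classical
  obtain ⟨x, y, t, rfl⟩ : ∃ x y t, w = x :: y :: t := by
    match w, h2 with
    | x :: y :: t, _ => exact ⟨x, y, t, rfl⟩
  set w := x :: y :: t with hw
  have hS : ((w.tails.toFinset).filter (fun v => v ≠ [] ∧ v ≠ w)).Nonempty := by
    refine ⟨y :: t, ?_⟩
    simp only [Finset.mem_filter, List.mem_toFinset, List.mem_tails]
    refine ⟨⟨[x], rfl⟩, by simp, ?_⟩
    intro h
    have := congrArg List.length h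
    simp [hw] at this
  obtain ⟨w₂, hmem, hmin⟩ := Finset.exists_min_image _ id hS
  simp only [Finset.mem_filter, List.mem_toFinset, List.mem_tails] at hmem
  refine ⟨w₂, hmem.1, hmem.2.1, hmem.2.2, fun v hv hvne hvnw => ?_⟩
  have hvmem : v ∈ Finset.filter (fun v => v ≠ [] ∧ v ≠ w) w.tails.toFinset := by
    simp only [Finset.mem_filter, List.mem_toFinset, List.mem_tails]
    exact ⟨hv, hvne, hvnw⟩
  have hle : w₂ ≤ v := hmin v hvmem
  rcases eq_or_lt_of_le hle with h | h
  · exact Or.inl h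
  · exact Or.inr h

lemma length_lt_of_proper_suffix {v w : List α} (h : v <:+ w) (hne : v ≠ w) :
    v.length < w.length := by
  obtain ⟨u, rfl⟩ := h
  have hu : u ≠ [] := by rintro rfl; simp at hne
  have : 0 < u.length := List.length_pos_iff.2 hu
  simp [List.length_append]
  omega

/-- Standard factorization of a Lyndon word of length ≥ 2. -/
lemma standard_factorization {w : List α} (hw : IsLyndon w) (h2 : 2 ≤ w.length) :
    ∃ w₁ w₂ : List α, w = w₁ ++ w₂ ∧ w₁ ≠ [] ∧ w₂ ≠ [] ∧ IsLyndon w₁ ∧ IsLyndon w₂ ∧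
      (∀ v : List α, IsLyndon v → v ≠ w → (∃ u : List α, w = u ++ v) → v.length ≤ w₂.length) := by
  obtain ⟨w₂, hsuf, hne, hnw, hmin⟩ := exists_min_suffix h2
  obtain ⟨w₁, hw1⟩ := hsuf
  have hw1ne : w₁ ≠ [] := by rintro rfl; exact hnw (by simpa using hw1)
  -- w₂ is Lyndon
  have hL2 : IsLyndon w₂ := by
    refine ⟨hne, fun u v heq hu hv => ?_⟩
    have hv2 : v <:+ w₂ := ⟨u, heq.symm⟩
    have hvsuf : v <:+ w := List.IsSuffix.trans hv2 ⟨w₁, hw1⟩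
    have hvlt : v.length < w₂.length := by
      subst heq; simp only [List.length_append]
      have := List.length_pos_iff.2 hu; omega
    have hvnw : v ≠ w := by
      intro hvw
      have h3 := length_lt_of_proper_suffix (⟨w₁, hw1⟩ : w₂ <:+ w) hnw
      have h4 := congrArg List.length hvw
      omega
    rcases hmin v hvsuf hv hvnw with h | h
    · exact absurd (congrArg List.length h) (by omega)
    · exact h
  -- w₁ is Lyndon
  have hL1 : IsLyndon w₁ := by
    refine ⟨hw1ne, fun u v heq hu hv => ?_⟩
    have hvlt : v.length < w₁.length := by
      subst heq; simp only [List.length_append]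
      have := List.length_pos_iff.2 hu; omega
    -- Lyndon property of w applied to w = u ++ (v ++ w₂)
    have hwlex : List.Lex (·<·) w (v ++ w₂) := by
      refine hw.2 u (v ++ w₂) ?_ hu (by simp [hv])
      rw [← hw1, heq, List.append_assoc]
    rcases lt_trichotomy (α := List α) w₁ v with h | h | h
    · exact h
    · exact absurd (congrArg List.length h) (by omega)
    · -- Lex v w₁; derive a contradiction
      exfalso
      rcases lex_cases h with hp | hstr
      · -- v is a prefix of w₁ : w₁ = v ++ s with s ≠ []
        obtain ⟨s, hs⟩ := hp
        have hsne : s ≠ [] := by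
          rintro rfl; simp at hs; exact absurd (congrArg List.length hs) (by omega)
        -- w = v ++ (s ++ w₂), and Lex w (v ++ w₂) gives Lex (s ++ w₂) w₂
        have h1 : List.Lex (·<·) (s ++ w₂) w₂ := by
          apply lex_strip v
          rw [← List.append_assoc, hs, hw1]
          exact hwlex
        -- s ++ w₂ is a proper nonempty suffix of w
        have hssuf : s ++ w₂ <:+ w := by
          refine ⟨v, ?_⟩
          rw [← List.append_assoc, hs, hw1]
        have hsnw : s ++ w₂ ≠ w := by
          intro hcontra
          have := congrArg List.length hcontra
          have hls := congrArg List.length hs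
          have hlw := congrArg List.length hw1
          simp only [List.length_append] at this hls hlw
          have := List.length_pos_iff.2 hv; omega
        rcases hmin (s ++ w₂) hssuf (by simp [hsne]) hsnw with hh | hh
        · have := congrArg List.length hh
          simp only [List.length_append] at this
          have := List.length_pos_iff.2 hsne; omega
        · exact lex_asymm h1 hh
      · -- strict difference: Lex (v ++ w₂) (w₁ ++ w₂) = Lex (v ++ w₂) w
        have := hstr w₂ w₂
        rw [hw1] at this
        exact lex_asymm hwlex this
  refine ⟨w₁, w₂, hw1.symm, hw1ne, hne, hL1, hL2, fun v hv hvnw ⟨u, hu⟩ => ?_⟩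
  by_contra hlen
  push_neg at hlen
  have hvsuf : v <:+ w := ⟨u, hu.symm⟩
  have h2v : w₂ <:+ v := suffix_of_suffix_length_le ⟨w₁, hw1⟩ hvsuf (le_of_lt hlen)
  obtain ⟨s, hs⟩ := h2v
  have hsne : s ≠ [] := by
    rintro rfl; simp at hs
    exact absurd (congrArg List.length hs) (by omega)
  -- Lyndon v gives Lex v w₂
  have h1 : List.Lex (·<·) v w₂ := hv.2 s w₂ hs.symm hsne hne
  rcases hmin v hvsuf hv.1 hvnw with hh | hh
  · rw [hh] at hlen; omega
  · exact lex_asymm h1 hh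

section Main

variable {K : Type*} [Field K] {d : ℕ}

lemma hmulsupp (p q : MonoidAlgebra K (FreeMonoid (Fin d))) (x : FreeMonoid (Fin d))
    (hx : (p * q).coeff x ≠ 0) : ∃ y z : List (Fin d), p.coeff (FreeMonoid.ofList y) ≠ 0 ∧
      q.coeff (FreeMonoid.ofList z) ≠ 0 ∧ x = FreeMonoid.ofList (y ++ z) := by
  classical
  have hmem : x ∈ (p * q).coeff.support := Finsupp.mem_support_iff.2 hx
  have hsub := MonoidAlgebra.support_coeff_mul_subset p q hmem
  rw [Finset.mem_mul] at hsub
  obtain ⟨y, hy, z, hz, hyz⟩ := hsub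
  refine ⟨FreeMonoid.toList y, FreeMonoid.toList z, ?_, ?_, ?_⟩
  · rw [FreeMonoid.ofList_toList]; exact Finsupp.mem_support_iff.1 hy
  · rw [FreeMonoid.ofList_toList]; exact Finsupp.mem_support_iff.1 hz
  · rw [← FreeMonoid.toList_mul, FreeMonoid.ofList_toList]; exact hyz.symm

lemma key (b : List (Fin d) → MonoidAlgebra K (FreeMonoid (Fin d)))
    (hletter : ∀ i : Fin d, b [i] = wordMonomial K [i])
    (hbracket : ∀ w w₁ w₂ : List (Fin d), IsLyndon w → w = w₁ ++ w₂ →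
      w₁ ≠ [] → w₂ ≠ [] → IsLyndon w₂ →
      (∀ v : List (Fin d), IsLyndon v → v ≠ w → (∃ u : List (Fin d), w = u ++ v) →
        v.length ≤ w₂.length) →
      b w = b w₁ * b w₂ - b w₂ * b w₁) :
    ∀ n : ℕ, ∀ w : List (Fin d), w.length ≤ n → IsLyndon w →
      (b w).coeff (FreeMonoid.ofList w) = 1 ∧
      ∀ v : List (Fin d), (b w).coeff (FreeMonoid.ofList v) ≠ 0 →
        v = w ∨ (v.length = w.length ∧ List.Lex (· < ·) w v) := by
  intro n
  induction n with
  | zero =>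
    intro w hlen hw
    exact absurd (List.length_eq_zero_iff.1 (Nat.le_zero.1 hlen)) hw.1
  | succ n ih =>
    intro w hlen hw
    rcases Nat.lt_or_ge w.length 2 with hsmall | hbig
    · -- single letter
      obtain ⟨i, rfl⟩ : ∃ i, w = [i] := by
        match w, hw.1, hsmall with
        | [i], _, _ => exact ⟨i, rfl⟩
      rw [hletter i]
      constructor
      · simp [wordMonomial, MonoidAlgebra.coeff_single, Finsupp.single_apply]
      · intro v hv
        left
        by_contra hne
        apply hv
        have h : FreeMonoid.ofList [i] ≠ FreeMonoid.ofList v :=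
          fun h => hne ((FreeMonoid.ofList.injective h).symm)
        rw [wordMonomial]
        exact Finsupp.single_eq_of_ne h.symm
    · -- length ≥ 2
      obtain ⟨w₁, w₂, hfac, h1ne, h2ne, hL1, hL2, hmax⟩ := standard_factorization hw hbig
      have hlw : w.length = w₁.length + w₂.length := by rw [hfac]; simp
      have h1pos : 0 < w₁.length := List.length_pos_iff.2 h1ne
      have h2pos : 0 < w₂.length := List.length_pos_iff.2 h2ne
      obtain ⟨hc1, hs1⟩ := ih w₁ (by omega) hL1
      obtain ⟨hc2, hs2⟩ := ih w₂ (by omega) hL2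
      have hb : b w = b w₁ * b w₂ - b w₂ * b w₁ :=
        hbracket w w₁ w₂ hw hfac h1ne h2ne hL2 hmax
      have hwlt2 : List.Lex (· < ·) w w₂ := hw.2 w₁ w₂ hfac h1ne h2ne
      have hofmul : FreeMonoid.ofList w = FreeMonoid.ofList w₁ * FreeMonoid.ofList w₂ := by
        rw [hfac]; rfl
      -- anything in the support of (b w₂ * b w₁) is > w
      have hswap : ∀ u₂ u₁ : List (Fin d),
          (u₂ = w₂ ∨ (u₂.length = w₂.length ∧ List.Lex (· < ·) w₂ u₂)) →
          List.Lex (· < ·) w (u₂ ++ u₁) := by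
        intro u₂ u₁ h
        rcases h with rfl | ⟨hl, hlex⟩
        · exact lex_append_right_of_le hwlt2 (by omega) u₁
        · exact lex_append_right_of_le (lex_trans hwlt2 hlex) (by omega) u₁
      have hgf0 : (b w₂ * b w₁).coeff (FreeMonoid.ofList w) = 0 := by
        by_contra h0
        obtain ⟨y, z, hy, hz, hyz⟩ := hmulsupp _ _ _ h0
        have hweq : w = y ++ z := FreeMonoid.ofList.injective hyz
        have hlex : List.Lex (· < ·) w (y ++ z) := by
          refine hswap y z ?_
          rcases hs2 y hy with h | ⟨hl, hlex⟩
          · exact Or.inl h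
          · exact Or.inr ⟨hl, hlex⟩
        rw [← hweq] at hlex
        exact lex_irrefl w hlex
      have hfg1 : (b w₁ * b w₂).coeff (FreeMonoid.ofList w) = 1 := by
        classical
        have huniq : UniqueMul (b w₁).coeff.support (b w₂).coeff.support
            (FreeMonoid.ofList w₁) (FreeMonoid.ofList w₂) := by
          intro a c ha hc habc
          have ha' := Finsupp.mem_support_iff.1 ha
          have hc' := Finsupp.mem_support_iff.1 hc
          set y := FreeMonoid.toList a with hy
          set z := FreeMonoid.toList c with hz
          have hay : a = FreeMonoid.ofList y := (FreeMonoid.ofList_toList a).symm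
          have hcz : c = FreeMonoid.ofList z := (FreeMonoid.ofList_toList c).symm
          rw [hay] at ha'
          rw [hcz] at hc'
          have hylen : y.length = w₁.length := by
            rcases hs1 y ha' with h | ⟨hl, _⟩
            · rw [h]
            · exact hl
          have hzlen : z.length = w₂.length := by
            rcases hs2 z hc' with h | ⟨hl, _⟩
            · rw [h]
            · exact hl
          have hcat : y ++ z = w₁ ++ w₂ := by
            have h := congrArg FreeMonoid.toList habc
            rw [FreeMonoid.toList_mul, FreeMonoid.toList_mul, FreeMonoid.toList_ofList,
              FreeMonoid.toList_ofList] at h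
            exact h
          obtain ⟨hyw, hzw⟩ := List.append_inj hcat hylen
          rw [hay, hcz, hyw, hzw]; exact ⟨rfl, rfl⟩
        have := MonoidAlgebra.mul_apply_mul_eq_mul_of_uniqueMul huniq
        rw [← hofmul] at this
        rw [this, hc1, hc2, one_mul]
      constructor
      · rw [hb, MonoidAlgebra.coeff_sub, Finsupp.sub_apply, hfg1, hgf0, sub_zero]
      · intro v hv
        rw [hb, MonoidAlgebra.coeff_sub, Finsupp.sub_apply] at hv
        have hor : (b w₁ * b w₂).coeff (FreeMonoid.ofList v) ≠ 0 ∨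
            (b w₂ * b w₁).coeff (FreeMonoid.ofList v) ≠ 0 := by
          by_contra hcon
          push_neg at hcon
          rw [hcon.1, hcon.2, sub_zero] at hv
          exact hv rfl
        rcases hor with h0 | h0
        · obtain ⟨y, z, hy, hz, hyz⟩ := hmulsupp _ _ _ h0
          have hveq : v = y ++ z := FreeMonoid.ofList.injective hyz
          rcases hs1 y hy with rfl | ⟨hl1, hlex1⟩
          · rcases hs2 z hz with rfl | ⟨hl2, hlex2⟩
            · exact Or.inl (by rw [hveq, hfac])
            · refine Or.inr ⟨by rw [hveq]; simp; omega, ?_⟩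
              rw [hveq, hfac]
              exact List.Lex.append_left _ hlex2 y
          · have hzlen : z.length = w₂.length := by
              rcases hs2 z hz with h | ⟨hl, _⟩
              · rw [h]
              · exact hl
            refine Or.inr ⟨by rw [hveq]; simp; omega, ?_⟩
            rw [hveq, hfac]
            exact lex_append_of_eqlen hlex1 hl1.symm w₂ z
        · obtain ⟨y, z, hy, hz, hyz⟩ := hmulsupp _ _ _ h0
          have hveq : v = y ++ z := FreeMonoid.ofList.injective hyz
          have hylen : y.length = w₂.length := by
            rcases hs2 y hy with h | ⟨hl, _⟩
            · rw [h]
            · exact hl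
          have hzlen : z.length = w₁.length := by
            rcases hs1 z hz with h | ⟨hl, _⟩
            · rw [h]
            · exact hl
          refine Or.inr ⟨by rw [hveq]; simp; omega, ?_⟩
          rw [hveq]
          refine hswap y z ?_
          rcases hs2 y hy with h | ⟨hl, hlex⟩
          · exact Or.inl h
          · exact Or.inr ⟨hl, hlex⟩

end Main

end Stmt11Aux

/-- Let `w` be a Lyndon word over an ordered alphabet. Then the right standard
bracketing `b[w]` — any function `b` satisfying `b[x] = x` for letters `x`, and
`b[w] = [b[w₁], b[w₂]]` whenever `w = w₁w₂` is a Lyndon word with `w₂` the longest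
proper tail of `w` that is a Lyndon word — expanded in the free associative algebra
over a field `K`, equals `w` plus a `K`-linear combination of words lexicographically
greater than `w`. -/
theorem stmt_11 (K : Type*) [Field K] (d : ℕ)
    (b : List (Fin d) → MonoidAlgebra K (FreeMonoid (Fin d)))
    (hletter : ∀ i : Fin d, b [i] = wordMonomial K [i])
    (hbracket : ∀ w w₁ w₂ : List (Fin d), IsLyndon w → w = w₁ ++ w₂ →
      w₁ ≠ [] → w₂ ≠ [] → IsLyndon w₂ →
      (∀ v : List (Fin d), IsLyndon v → v ≠ w → (∃ u : List (Fin d), w = u ++ v) →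
        v.length ≤ w₂.length) →
      b w = b w₁ * b w₂ - b w₂ * b w₁) :
    ∀ w : List (Fin d), IsLyndon w →
      (b w).coeff (FreeMonoid.ofList w) = 1 ∧
      ∀ v : List (Fin d), (b w).coeff (FreeMonoid.ofList v) ≠ 0 →
        v = w ∨ List.Lex (· < ·) w v := by
  intro w hw
  obtain ⟨h1, h2⟩ := Stmt11Aux.key b hletter hbracket w.length w le_rfl hw
  exact ⟨h1, fun v hv => (h2 v hv).imp id And.right⟩
end

section
/- The Galois number $\mathcal{G}_n(q) = \sum_{k=0}^n \binom{n}{k}_q$, counting all subspaces of an $n$-dimensional vector space over $\mathbb{F}_q$, satisfies $\mathcal{G}_n(q) \le C(q) D(q) q^{n^2/4}$, where $C(q) = \sum_{r=-\infty}^{\infty} q^{-r^2}$ and $D(q) = \prod_{j=1}^{\infty}(1-q^{-j})^{-1}$. -/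
open Real


lemma summable_gauss {a : ℝ} (ha : 0 < a) (c : ℝ) :
    Summable (fun n : ℤ => rexp (-a * ((n : ℝ) + c) ^ 2)) := by
  have hr : rexp (-(a/2)) < 1 := exp_lt_one_iff.2 (by linarith)
  have hgeo : Summable (fun n : ℕ => rexp (a * c ^ 2) * rexp (-(a/2)) ^ n) :=
    (summable_geometric_of_lt_one (exp_nonneg _) hr).mul_left _
  have key : ∀ x : ℝ, ∀ n : ℕ, x ^ 2 = (n : ℝ) ^ 2 →
      rexp (-a * (x + c) ^ 2) ≤ rexp (a * c ^ 2) * rexp (-(a/2)) ^ n := by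
    intro x n hx
    rw [← exp_nat_mul, ← Real.exp_add]
    apply Real.exp_le_exp.2
    have hn : (n : ℝ) ≤ (n : ℝ) ^ 2 := by
      rcases Nat.eq_zero_or_pos n with h | h
      · simp [h]
      · have : (1:ℝ) ≤ (n:ℝ) := by exact_mod_cast h
        nlinarith
    nlinarith [sq_nonneg (x + 2 * c)]
  apply Summable.of_nat_of_neg
  · exact Summable.of_nonneg_of_le (fun n => (exp_pos _).le)
      (fun n => key _ n (by push_cast; ring)) hgeo
  · exact Summable.of_nonneg_of_le (fun n => (exp_pos _).le)
      (fun n => key _ n (by push_cast; ring)) hgeo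

lemma theta2_le_theta3 {a : ℝ} (ha : 0 < a) :
    (∑' n : ℤ, rexp (-a * ((n : ℝ) + 1/2) ^ 2)) ≤ ∑' n : ℤ, rexp (-a * (n : ℝ) ^ 2) := by
  have hπ : (0:ℝ) < π := pi_pos
  have hπ0 : (π:ℝ) ≠ 0 := hπ.ne'
  have hπC : (π:ℂ) ≠ 0 := by exact_mod_cast hπ0
  have haC : (a:ℂ) ≠ 0 := by exact_mod_cast ha.ne'
  have hA : 0 < a / π := div_pos ha hπ
  set c : ℝ := π ^ 2 / a with hc_def
  have hc : 0 < c := by positivity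
  set P : ℝ := 1 / (a / π) ^ (1/2 : ℝ) with hP_def
  have hP : 0 ≤ P := by positivity
  set T3 : ℝ := ∑' n : ℤ, rexp (-c * (n : ℝ) ^ 2) with hT3_def
  set T4 : ℝ := ∑' n : ℤ, (-1 : ℝ) ^ n * rexp (-c * (n : ℝ) ^ 2) with hT4_def
  have hsum3 : Summable (fun n : ℤ => rexp (-c * (n : ℝ) ^ 2)) := by
    simpa using summable_gauss hc 0
  have hsum4 : Summable (fun n : ℤ => (-1 : ℝ) ^ n * rexp (-c * (n : ℝ) ^ 2)) := by
    apply Summable.of_norm_bounded hsum3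
    intro n
    rw [norm_mul, norm_zpow, norm_neg, norm_one, one_zpow, one_mul, Real.norm_eq_abs,
      abs_of_pos (exp_pos _)]
  -- step 1 : S₃ = P * T₃
  have h3 : (∑' n : ℤ, rexp (-a * (n : ℝ) ^ 2)) = P * T3 := by
    have h := Real.tsum_exp_neg_mul_int_sq hA
    have e1 : ∀ n : ℤ, -π * (a / π) * (n:ℝ) ^ 2 = -a * (n:ℝ) ^ 2 := by
      intro n; field_simp
    have e2 : ∀ n : ℤ, -π / (a / π) * (n:ℝ) ^ 2 = -c * (n:ℝ) ^ 2 := by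
      intro n; rw [div_div_eq_mul_div, hc_def]; ring
    rw [hT3_def, hP_def]
    rw [← tsum_congr (fun n : ℤ => congrArg rexp (e1 n)), h,
      tsum_congr (fun n : ℤ => congrArg rexp (e2 n))]
  -- step 2 : S₂ = P * T₄ via complex Poisson summation
  have h2 : (∑' n : ℤ, rexp (-a * ((n : ℝ) + 1/2) ^ 2)) = P * T4 := by
    have key := Complex.tsum_exp_neg_quadratic (a := ((a / π : ℝ) : ℂ))
      (by simpa using hA) (-(a / (2 * π)) : ℂ)
    have hL : ∀ n : ℤ, Complex.exp (-(π:ℂ) * ((a / π : ℝ) : ℂ) * (n:ℂ) ^ 2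
        + 2 * (π:ℂ) * (-(a / (2 * π)) : ℂ) * (n:ℂ)) =
        ((rexp (a/4) * rexp (-a * ((n : ℝ) + 1/2) ^ 2) : ℝ) : ℂ) := by
      intro n
      rw [Complex.ofReal_mul, Complex.ofReal_exp, Complex.ofReal_exp, ← Complex.exp_add]
      congr 1
      push_cast
      field_simp
      ring
    have hR : ∀ n : ℤ, Complex.exp (-(π:ℂ) / ((a / π : ℝ) : ℂ) *
        ((n:ℂ) + Complex.I * (-(a / (2 * π)) : ℂ)) ^ 2) =
        ((rexp (a/4) * ((-1 : ℝ) ^ n * rexp (-c * (n : ℝ) ^ 2)) : ℝ) : ℂ) := by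
      intro n
      have harg : (-(π:ℂ) / ((a / π : ℝ) : ℂ) *
          ((n:ℂ) + Complex.I * (-(a / (2 * π)) : ℂ)) ^ 2) =
          ((a/4 : ℝ) : ℂ) + ((-c * (n : ℝ) ^ 2 : ℝ) : ℂ) + (n : ℂ) * ((π:ℂ) * Complex.I) := by
        have hI : (Complex.I) ^ 2 = -1 := Complex.I_sq
        push_cast [hc_def]
        field_simp
        ring_nf
        rw [hI]
        ring
      rw [harg, Complex.exp_add, Complex.exp_add, Complex.exp_int_mul, Complex.exp_pi_mul_I,
        ← Complex.ofReal_exp, ← Complex.ofReal_exp]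
      push_cast
      ring
    rw [tsum_congr hL, tsum_congr hR] at key
    have hcpow : (1 / (((a / π : ℝ) : ℂ)) ^ (1/2 : ℂ) : ℂ) = ((P : ℝ) : ℂ) := by
      rw [show (((a / π : ℝ) : ℂ)) ^ (1/2 : ℂ) = Complex.ofReal ((a/π) ^ (1/2:ℝ)) by
        rw [Complex.ofReal_cpow hA.le]; norm_num]
      rw [hP_def]
      push_cast
      ring
    rw [hcpow] at key
    have lhsE : (∑' n : ℤ, (((rexp (a/4) * rexp (-a * ((n : ℝ) + 1/2) ^ 2)) : ℝ) : ℂ))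
        = (((rexp (a/4) * ∑' n : ℤ, rexp (-a * ((n : ℝ) + 1/2) ^ 2)) : ℝ) : ℂ) := by
      rw [← Complex.ofReal_tsum, tsum_mul_left]
    have rhsE : (((P:ℝ):ℂ) * ∑' n : ℤ,
          (((rexp (a/4) * ((-1:ℝ) ^ n * rexp (-c * (n : ℝ) ^ 2))) : ℝ) : ℂ))
        = (((P * (rexp (a/4) * T4)) : ℝ) : ℂ) := by
      rw [← Complex.ofReal_tsum, tsum_mul_left, hT4_def, ← Complex.ofReal_mul]
    have key3 : rexp (a/4) * (∑' n : ℤ, rexp (-a * ((n : ℝ) + 1/2) ^ 2))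
        = P * (rexp (a/4) * T4) :=
      Complex.ofReal_inj.mp (lhsE.symm.trans (key.trans rhsE))
    exact mul_left_cancel₀ (exp_pos (a/4)).ne' (key3.trans (by ring))
  -- conclude
  rw [h2, h3]
  apply mul_le_mul_of_nonneg_left _ hP
  apply Summable.tsum_le_tsum _ hsum4 hsum3
  intro n
  rcases Int.even_or_odd n with he | ho
  · rw [he.neg_one_zpow, one_mul]
  · rw [ho.neg_one_zpow]
    nlinarith [exp_pos (-c * (n:ℝ)^2)]



lemma sum_gauss_le {a : ℝ} (ha : 0 < a) (n : ℕ) :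
    ∑ k ∈ Finset.range (n+1), rexp (-a * ((k:ℝ) - n/2)^2) ≤ ∑' r : ℤ, rexp (-a * (r:ℝ)^2) := by
  have hsum0 : Summable (fun r : ℤ => rexp (-a * (r:ℝ)^2)) := by
    simpa using summable_gauss ha 0
  rcases Nat.even_or_odd n with ⟨m, hm⟩ | ⟨m, hm⟩
  · have hcongr : ∀ k ∈ Finset.range (n+1), rexp (-a * ((k:ℝ) - n/2)^2)
        = (fun r : ℤ => rexp (-a * (r:ℝ)^2)) ((k:ℤ) - m) := by
      intro k _
      simp only
      congr 1
      push_cast [hm]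
      ring
    rw [Finset.sum_congr rfl hcongr, ← Finset.sum_image (f := fun r : ℤ => rexp (-a * (r:ℝ)^2))
      (g := fun k : ℕ => (k:ℤ) - m) (by intro x _ y _ h; simp only at h; omega)]
    exact Summable.sum_le_tsum _ (fun i _ => (exp_pos _).le) hsum0
  · have hsumh : Summable (fun j : ℤ => rexp (-a * ((j:ℝ) + 1/2)^2)) := summable_gauss ha (1/2)
    have hcongr : ∀ k ∈ Finset.range (n+1), rexp (-a * ((k:ℝ) - n/2)^2)
        = (fun j : ℤ => rexp (-a * ((j:ℝ) + 1/2)^2)) ((k:ℤ) - m - 1) := by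
      intro k _
      simp only
      congr 1
      push_cast [hm]
      ring
    rw [Finset.sum_congr rfl hcongr, ← Finset.sum_image
      (f := fun j : ℤ => rexp (-a * ((j:ℝ) + 1/2)^2))
      (g := fun k : ℕ => (k:ℤ) - m - 1) (by intro x _ y _ h; simp only at h; omega)]
    exact le_trans (Summable.sum_le_tsum _ (fun i _ => (exp_pos _).le) hsumh) (theta2_le_theta3 ha)

/-- The Galois number `𝒢_n(q) = ∑_{k=0}^n (n k)_q`, counting all subspaces of an
`n`-dimensional vector space over `𝔽_q`, satisfies `𝒢_n(q) ≤ C(q) D(q) q^{n²/4}`,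
where `C(q) = ∑_{r ∈ ℤ} q^{-r²}` and `D(q) = ∏_{j≥1} (1-q^{-j})⁻¹`. -/


theorem stmt_17 (q : ℝ) (hq : 1 < q) (n : ℕ) :
    (∑ k ∈ Finset.range (n + 1),
        ∏ i ∈ Finset.range k, (q ^ (n - i) - 1) / (q ^ (k - i) - 1)) ≤
      (∑' r : ℤ, q ^ (-((r : ℝ) ^ 2))) * (∏' j : ℕ, (1 - q⁻¹ ^ (j + 1))⁻¹) *
        q ^ ((n : ℝ) ^ 2 / 4) := by
  have hq0 : (0:ℝ) < q := lt_trans one_pos hq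
  have ha : 0 < Real.log q := Real.log_pos hq
  set a : ℝ := Real.log q with ha_def
  have hqinv0 : 0 < q⁻¹ := inv_pos.2 hq0
  have hqinv1 : q⁻¹ < 1 := inv_lt_one_of_one_lt₀ hq
  set f : ℕ → ℝ := fun j => (1 - q⁻¹ ^ (j + 1))⁻¹ with hf_def
  have hxpos : ∀ j : ℕ, 0 < q⁻¹ ^ (j + 1) := fun j => pow_pos hqinv0 _
  have hxlt : ∀ j : ℕ, q⁻¹ ^ (j + 1) < 1 :=
    fun j => pow_lt_one₀ hqinv0.le hqinv1 (Nat.succ_ne_zero j)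
  have hfpos : ∀ j : ℕ, 0 < f j := fun j => inv_pos.2 (by linarith [hxlt j])
  have hf1 : ∀ j : ℕ, 1 ≤ f j := by
    intro j
    rw [hf_def]
    rw [le_inv_comm₀ one_pos (by linarith [hxlt j])]
    simp only [inv_one]
    linarith [hxpos j]
  -- summability of logs
  have hlog_sum : Summable (fun j : ℕ => Real.log (f j)) := by
    have hb : Summable (fun j : ℕ => (1 - q⁻¹)⁻¹ * q⁻¹ ^ (j + 1)) := by
      apply Summable.mul_left
      exact (summable_geometric_of_lt_one hqinv0.le hqinv1).comp_injective
        (add_left_injective 1)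
    apply Summable.of_nonneg_of_le (fun j => Real.log_nonneg (hf1 j)) _ hb
    intro j
    have h1x : 0 < 1 - q⁻¹ ^ (j + 1) := by linarith [hxlt j]
    have h1q : 0 < 1 - q⁻¹ := by linarith
    have hle : Real.log (f j) ≤ f j - 1 := Real.log_le_sub_one_of_pos (hfpos j)
    have : f j - 1 = q⁻¹ ^ (j + 1) * (1 - q⁻¹ ^ (j + 1))⁻¹ := by
      have hne : (1:ℝ) - q⁻¹ ^ (j + 1) ≠ 0 := h1x.ne'
      have hgt : (1:ℝ) < q ^ (j + 1) := one_lt_pow₀ hq (Nat.succ_ne_zero j)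
      rw [hf_def]
      field_simp
      rw [div_sub_one (by simpa [one_div] using hne)]
      congr 1
      ring
    rw [this] at hle
    refine hle.trans ?_
    rw [mul_comm]
    apply mul_le_mul _ le_rfl (hxpos j).le (by positivity)
    apply inv_anti₀ h1q
    have : q⁻¹ ^ (j + 1) ≤ q⁻¹ := by
      calc q⁻¹ ^ (j + 1) ≤ q⁻¹ ^ 1 := pow_le_pow_of_le_one hqinv0.le hqinv1.le (by omega)
      _ = q⁻¹ := pow_one _
    linarith
  -- tprod = exp (tsum log)
  have htprod : (∏' j : ℕ, f j) = rexp (∑' j : ℕ, Real.log (f j)) := by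
    exact (Real.rexp_tsum_eq_tprod hfpos hlog_sum).symm
  have hDfin : ∀ k : ℕ, (∏ j ∈ Finset.range k, f j) ≤ ∏' j : ℕ, f j := by
    intro k
    rw [htprod]
    have : (∏ j ∈ Finset.range k, f j) = rexp (∑ j ∈ Finset.range k, Real.log (f j)) := by
      rw [Real.exp_sum]
      exact Finset.prod_congr rfl (fun j _ => (Real.exp_log (hfpos j)).symm)
    rw [this]
    apply Real.exp_le_exp.2
    exact Summable.sum_le_tsum _ (fun j _ => Real.log_nonneg (hf1 j)) hlog_sum
  have hD0 : 0 ≤ ∏' j : ℕ, f j := by rw [htprod]; positivity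
  -- step 1 : per-k bound
  have step1 : ∀ k, k ≤ n → (∏ i ∈ Finset.range k, (q ^ (n - i) - 1) / (q ^ (k - i) - 1))
      ≤ q ^ (k * (n - k)) * ∏ j ∈ Finset.range k, f j := by
    intro k hk
    have hfac : ∀ i ∈ Finset.range k, (q ^ (n - i) - 1) / (q ^ (k - i) - 1)
        ≤ q ^ (n - k) * f (k - 1 - i) := by
      intro i hi
      have hik : i < k := Finset.mem_range.1 hi
      have hden1 : 1 < q ^ (k - i) := one_lt_pow₀ hq (by omega)
      have hden : 0 < q ^ (k - i) - 1 := by linarith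
      rw [div_le_iff₀ hden]
      have hidx : k - 1 - i + 1 = k - i := by omega
      have hQ : f (k - 1 - i) * (q ^ (k - i) - 1) = q ^ (k - i) := by
        rw [hf_def]
        simp only [hidx]
        rw [inv_pow]
        have hqk : (0:ℝ) < q ^ (k - i) := pow_pos hq0 _
        field_simp
      calc q ^ (n - i) - 1 ≤ q ^ (n - i) := by linarith
        _ = q ^ (n - k) * q ^ (k - i) := by rw [← pow_add]; congr 1; omega
        _ = q ^ (n - k) * f (k - 1 - i) * (q ^ (k - i) - 1) := by rw [mul_assoc, hQ]
    calc (∏ i ∈ Finset.range k, (q ^ (n - i) - 1) / (q ^ (k - i) - 1))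
        ≤ ∏ i ∈ Finset.range k, (q ^ (n - k) * f (k - 1 - i)) := by
          apply Finset.prod_le_prod _ hfac
          intro i hi
          have hik : i < k := Finset.mem_range.1 hi
          have h1 : (1:ℝ) ≤ q ^ (n - i) := one_le_pow₀ hq.le
          have h2 : 1 < q ^ (k - i) := one_lt_pow₀ hq (by omega)
          apply div_nonneg <;> linarith
      _ = (q ^ (n - k)) ^ k * ∏ i ∈ Finset.range k, f (k - 1 - i) := by
          rw [Finset.prod_mul_distrib, Finset.prod_const, Finset.card_range]
      _ = q ^ (k * (n - k)) * ∏ j ∈ Finset.range k, f j := by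
          rw [Finset.prod_range_reflect, ← pow_mul, mul_comm (n - k) k]
  -- step 2 : gaussian sum bound
  have step2 : (∑ k ∈ Finset.range (n + 1), (q:ℝ) ^ (k * (n - k)))
      ≤ (∑' r : ℤ, q ^ (-((r : ℝ) ^ 2))) * q ^ ((n : ℝ) ^ 2 / 4) := by
    have hC : (∑' r : ℤ, q ^ (-((r : ℝ) ^ 2))) = ∑' r : ℤ, rexp (-a * (r:ℝ)^2) := by
      apply tsum_congr
      intro r
      rw [Real.rpow_def_of_pos hq0]
      congr 1
      ring
    have hterm : ∀ k ∈ Finset.range (n + 1), (q:ℝ) ^ (k * (n - k))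
        = q ^ ((n : ℝ) ^ 2 / 4) * rexp (-a * ((k:ℝ) - n/2)^2) := by
      intro k hk
      have hkn : k ≤ n := by
        have := Finset.mem_range.1 hk; omega
      rw [Real.rpow_def_of_pos hq0, ← Real.exp_add, ← Real.rpow_natCast q,
        Real.rpow_def_of_pos hq0]
      congr 1
      have : ((k * (n - k) : ℕ) : ℝ) = (k:ℝ) * ((n:ℝ) - (k:ℝ)) := by
        push_cast [Nat.cast_sub hkn]
        ring
      rw [this]
      ring
    rw [Finset.sum_congr rfl hterm, ← Finset.mul_sum, hC]
    rw [mul_comm ((∑' r : ℤ, rexp (-a * (r:ℝ)^2))) _]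
    apply mul_le_mul_of_nonneg_left (sum_gauss_le ha n) (by positivity)
  -- assemble
  calc (∑ k ∈ Finset.range (n + 1),
        ∏ i ∈ Finset.range k, (q ^ (n - i) - 1) / (q ^ (k - i) - 1))
      ≤ ∑ k ∈ Finset.range (n + 1), q ^ (k * (n - k)) * (∏' j : ℕ, f j) := by
        apply Finset.sum_le_sum
        intro k hk
        have hkn : k ≤ n := by have := Finset.mem_range.1 hk; omega
        refine (step1 k hkn).trans ?_
        exact mul_le_mul_of_nonneg_left (hDfin k) (by positivity)
    _ = (∑ k ∈ Finset.range (n + 1), (q:ℝ) ^ (k * (n - k))) * (∏' j : ℕ, f j) := by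
        rw [Finset.sum_mul]
    _ ≤ ((∑' r : ℤ, q ^ (-((r : ℝ) ^ 2))) * q ^ ((n : ℝ) ^ 2 / 4)) * (∏' j : ℕ, f j) :=
        mul_le_mul_of_nonneg_right step2 hD0
    _ = (∑' r : ℤ, q ^ (-((r : ℝ) ^ 2))) * (∏' j : ℕ, (1 - q⁻¹ ^ (j + 1))⁻¹) *
        q ^ ((n : ℝ) ^ 2 / 4) := by rw [hf_def]; ring
end

section
/- Let $q > 1$, $a > 0$, and $f(x) = -ax^2 + bx + c$. For any integers $t \le u$, $\sum_{r=t}^u q^{f(r)} \le C(q^a)\, q^{f(y)}$, where $y$ is a point in $[t,u]$ at which $f$ attains its maximum on $[t,u]$, and $C(s) = \sum_{r=-\infty}^{\infty} s^{-r^2}$. -/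
open Real Complex

/-- Summability of a shifted Gaussian over `ℤ`. -/
lemma summable_gauss_shift (c : ℝ) (hc : 0 < c) (w : ℝ) :
    Summable (fun n : ℤ => Real.exp (-c * ((n : ℝ) - w) ^ 2)) := by
  have hT : 0 < c / π := div_pos hc Real.pi_pos
  refine Summable.of_nonneg_of_le (fun n => (Real.exp_pos _).le) (fun n => ?_)
    ((summable_pow_mul_jacobiTheta₂_term_bound (c * |w| / π) hT 0).congr
      (fun n => by rw [pow_zero, one_mul]))
  refine Real.exp_le_exp.mpr ?_
  have h1 : -π * (c / π * (n : ℝ) ^ 2 - 2 * (c * |w| / π) * |(n : ℤ)|)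
      = -(c * (n : ℝ) ^ 2) + 2 * c * |w| * |(n : ℝ)| := by
    push_cast
    field_simp
    ring
  rw [h1]
  have h2 : w * (n : ℝ) ≤ |w| * |(n : ℝ)| := by
    calc w * (n : ℝ) ≤ |w * (n : ℝ)| := le_abs_self _
    _ = |w| * |(n : ℝ)| := abs_mul _ _
  nlinarith [sq_nonneg w, hc.le, mul_le_mul_of_nonneg_left h2 hc.le]

/-- Theta maximality: the Gaussian sum over `ℤ` is largest with no shift. -/
lemma theta_le (c : ℝ) (hc : 0 < c) (w : ℝ) :
    (∑' n : ℤ, Real.exp (-c * ((n : ℝ) - w) ^ 2)) ≤ ∑' n : ℤ, Real.exp (-c * (n : ℝ) ^ 2) := by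
  have hπ : (0:ℝ) < π := Real.pi_pos
  set aR : ℝ := c / π with haRdef
  have haR : 0 < aR := div_pos hc hπ
  have ha : 0 < ((aR : ℂ)).re := by simpa using haR
  set bR : ℝ := c * w / π with hbRdef
  have key := Complex.tsum_exp_neg_quadratic ha (bR : ℂ)
  -- rewrite the left side of `key`
  have hterm : ∀ n : ℤ, Complex.exp (-(π:ℂ) * (aR : ℂ) * (n : ℂ) ^ 2 + 2 * (π:ℂ) * (bR : ℂ) * (n : ℂ))
      = ((Real.exp (c * w ^ 2) * Real.exp (-c * ((n : ℝ) - w) ^ 2) : ℝ) : ℂ) := by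
    intro n
    have hexp : (-(π:ℂ) * (aR : ℂ) * (n : ℂ) ^ 2 + 2 * (π:ℂ) * (bR : ℂ) * (n : ℂ))
        = ((c * w ^ 2 + (-c * ((n : ℝ) - w) ^ 2) : ℝ) : ℂ) := by
      rw [haRdef, hbRdef]
      have : (π:ℂ) ≠ 0 := by exact_mod_cast hπ.ne'
      push_cast
      field_simp
      ring
    rw [hexp, ← Complex.ofReal_exp, Real.exp_add]
  have hL : (∑' n : ℤ, Complex.exp (-(π:ℂ) * (aR : ℂ) * (n : ℂ) ^ 2 + 2 * (π:ℂ) * (bR : ℂ) * (n : ℂ)))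
      = ((Real.exp (c * w ^ 2) * ∑' n : ℤ, Real.exp (-c * ((n : ℝ) - w) ^ 2) : ℝ) : ℂ) := by
    rw [tsum_congr hterm, ← Complex.ofReal_tsum, tsum_mul_left]
  rw [hL] at key
  -- norms of the right-hand terms
  have hnormterm : ∀ n : ℤ, ‖Complex.exp (-(π:ℂ) / (aR : ℂ) * ((n : ℂ) + Complex.I * (bR : ℂ)) ^ 2)‖
      = Real.exp (π / aR * bR ^ 2) * Real.exp (-(π / aR) * (n : ℝ) ^ 2) := by
    intro n
    have haC : (aR : ℂ) ≠ 0 := by exact_mod_cast haR.ne'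
    have hz : (-(π:ℂ) / (aR : ℂ) * ((n : ℂ) + Complex.I * (bR : ℂ)) ^ 2)
        = (((π / aR * bR ^ 2 + -(π / aR) * (n : ℝ) ^ 2) : ℝ) : ℂ)
          + ((-(π / aR) * (2 * (n : ℝ) * bR) : ℝ) : ℂ) * Complex.I := by
      push_cast
      field_simp
      ring_nf
      rw [Complex.I_sq]
      ring
    rw [Complex.norm_exp, hz, ← Real.exp_add]
    congr 1
    simp [← Complex.ofReal_pow]
  have hsum0 : Summable (fun n : ℤ => Real.exp (-(π / aR) * (n : ℝ) ^ 2)) := by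
    refine (summable_gauss_shift (π / aR) (div_pos hπ haR) 0).congr (fun n => by rw [sub_zero])
  have hsumnorm : Summable (fun n : ℤ =>
      ‖Complex.exp (-(π:ℂ) / (aR : ℂ) * ((n : ℂ) + Complex.I * (bR : ℂ)) ^ 2)‖) := by
    refine ((hsum0.mul_left (Real.exp (π / aR * bR ^ 2))).congr (fun n => ?_))
    rw [hnormterm]
  -- take norms in `key`
  have hA : 0 ≤ ∑' n : ℤ, Real.exp (-c * ((n : ℝ) - w) ^ 2) :=
    tsum_nonneg fun n => (Real.exp_pos _).le
  have hnormL : ‖((Real.exp (c * w ^ 2) * ∑' n : ℤ, Real.exp (-c * ((n : ℝ) - w) ^ 2) : ℝ) : ℂ)‖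
      = Real.exp (c * w ^ 2) * ∑' n : ℤ, Real.exp (-c * ((n : ℝ) - w) ^ 2) := by
    rw [Complex.norm_real, Real.norm_eq_abs]
    exact abs_of_nonneg (mul_nonneg (Real.exp_pos _).le hA)
  have hcpow : ((aR : ℂ) ^ (1 / 2 : ℂ)) = ((aR ^ (1 / 2 : ℝ) : ℝ) : ℂ) := by
    rw [Complex.ofReal_cpow haR.le]
    norm_num
  have hbound : Real.exp (c * w ^ 2) * (∑' n : ℤ, Real.exp (-c * ((n : ℝ) - w) ^ 2))
      ≤ (1 / aR ^ (1 / 2 : ℝ)) * (Real.exp (π / aR * bR ^ 2)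
          * ∑' n : ℤ, Real.exp (-(π / aR) * (n : ℝ) ^ 2)) := by
    rw [← hnormL, key, norm_mul]
    have h1 : ‖(1 : ℂ) / (aR : ℂ) ^ (1 / 2 : ℂ)‖ = 1 / aR ^ (1 / 2 : ℝ) := by
      rw [hcpow, norm_div, norm_one, Complex.norm_real, Real.norm_eq_abs,
        _root_.abs_of_nonneg (Real.rpow_nonneg haR.le _)]
    rw [h1]
    refine mul_le_mul_of_nonneg_left ?_ (by positivity)
    calc ‖∑' n : ℤ, Complex.exp (-(π:ℂ) / (aR : ℂ) * ((n : ℂ) + Complex.I * (bR : ℂ)) ^ 2)‖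
        ≤ ∑' n : ℤ, ‖Complex.exp (-(π:ℂ) / (aR : ℂ) * ((n : ℂ) + Complex.I * (bR : ℂ)) ^ 2)‖ :=
          norm_tsum_le_tsum_norm hsumnorm
      _ = ∑' n : ℤ, Real.exp (π / aR * bR ^ 2) * Real.exp (-(π / aR) * (n : ℝ) ^ 2) :=
          tsum_congr hnormterm
      _ = Real.exp (π / aR * bR ^ 2) * ∑' n : ℤ, Real.exp (-(π / aR) * (n : ℝ) ^ 2) :=
          tsum_mul_left
  -- the exponential prefactors cancel
  have hcancel : π / aR * bR ^ 2 = c * w ^ 2 := by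
    rw [haRdef, hbRdef]
    field_simp
  rw [hcancel] at hbound
  have hexppos : 0 < Real.exp (c * w ^ 2) := Real.exp_pos _
  have hmain : (∑' n : ℤ, Real.exp (-c * ((n : ℝ) - w) ^ 2))
      ≤ (1 / aR ^ (1 / 2 : ℝ)) * ∑' n : ℤ, Real.exp (-(π / aR) * (n : ℝ) ^ 2) := by
    have := hbound
    rw [mul_comm (Real.exp (c * w ^ 2)) _, mul_comm (Real.exp (c * w ^ 2)) _, ← mul_assoc] at this
    exact le_of_mul_le_mul_right this hexppos
  refine hmain.trans (le_of_eq ?_)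
  have h0 := Real.tsum_exp_neg_mul_int_sq haR
  have h1 : ∀ n : ℤ, Real.exp (-π * aR * (n : ℝ) ^ 2) = Real.exp (-c * (n : ℝ) ^ 2) := by
    intro n
    congr 1
    rw [haRdef]
    field_simp
  have h2 : ∀ n : ℤ, Real.exp (-π / aR * (n : ℝ) ^ 2) = Real.exp (-(π / aR) * (n : ℝ) ^ 2) := by
    intro n
    rw [neg_div]
  rw [tsum_congr h1, tsum_congr h2] at h0
  rw [← h0]

/-- Let `q > 1`, `a > 0`, and `f(x) = -ax² + bx + c`. For integers `t ≤ u`, if `y` is a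
point of `[t,u]` at which `f` attains its maximum on `[t,u]`, then
`∑_{r=t}^u q^{f(r)} ≤ C(q^a) q^{f(y)}`, where `C(s) = ∑_{r ∈ ℤ} s^{-r²}`. -/
theorem stmt_18 (q : ℝ) (hq : 1 < q) (a b c : ℝ) (ha : 0 < a)
    (f : ℝ → ℝ) (hf : ∀ x, f x = -a * x ^ 2 + b * x + c)
    (t u : ℤ) (htu : t ≤ u) (y : ℝ) (hyt : (t : ℝ) ≤ y) (hyu : y ≤ (u : ℝ))
    (hymax : ∀ x : ℝ, (t : ℝ) ≤ x → x ≤ (u : ℝ) → f x ≤ f y) :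
    (∑ r ∈ Finset.Icc t u, q ^ f (r : ℝ)) ≤
      (∑' r : ℤ, (q ^ a) ^ (-((r : ℝ) ^ 2))) * q ^ f y := by
  have hq0 : (0:ℝ) < q := lt_trans one_pos hq
  have htu' : (t : ℝ) ≤ (u : ℝ) := by exact_mod_cast htu
  set C := a * Real.log q with hCdef
  have hC : 0 < C := mul_pos ha (Real.log_pos hq)
  -- find a center w with f r ≤ f y - a (r - w)² on [t,u]
  obtain ⟨w, hw⟩ : ∃ w : ℝ, ∀ r : ℤ, (t:ℝ) ≤ (r:ℝ) → (r:ℝ) ≤ (u:ℝ) →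
      f (r:ℝ) ≤ f y - a * ((r : ℝ) - w) ^ 2 := by
    rcases le_total (b / (2 * a)) (t : ℝ) with h | h
    · refine ⟨(t : ℝ), fun r h1 h2 => ?_⟩
      have hb : b ≤ 2 * a * (t : ℝ) := by
        rw [div_le_iff₀ (by positivity)] at h
        linarith
      have hft := hymax (t : ℝ) le_rfl htu'
      have e1 := hf (r : ℝ); have e2 := hf (t : ℝ)
      nlinarith [mul_nonneg (sub_nonneg.2 h1) (sub_nonneg.2 hb)]
    · rcases le_total (u : ℝ) (b / (2 * a)) with h' | h'
      · refine ⟨(u : ℝ), fun r h1 h2 => ?_⟩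
        have hb : 2 * a * (u : ℝ) ≤ b := by
          rw [le_div_iff₀ (by positivity)] at h'
          linarith
        have hfu := hymax (u : ℝ) htu' le_rfl
        have e1 := hf (r : ℝ); have e2 := hf (u : ℝ)
        nlinarith [mul_nonneg (sub_nonneg.2 h2) (sub_nonneg.2 hb)]
      · refine ⟨b / (2 * a), fun r h1 h2 => ?_⟩
        set v := b / (2 * a) with hvdef
        have h2av : 2 * a * v = b := by
          rw [hvdef]
          field_simp
        have hfv := hymax v h h'
        have e1 := hf (r : ℝ); have e2 := hf v
        nlinarith [sq_nonneg ((r:ℝ) - v)]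
  -- pointwise bound on each summand
  have hterm : ∀ r : ℤ, r ∈ Finset.Icc t u →
      q ^ f (r : ℝ) ≤ Real.exp (-C * ((r : ℝ) - w) ^ 2) * q ^ f y := by
    intro r hr
    rw [Finset.mem_Icc] at hr
    have h1 := hw r (by exact_mod_cast hr.1) (by exact_mod_cast hr.2)
    calc q ^ f (r : ℝ) ≤ q ^ (f y - a * ((r : ℝ) - w) ^ 2) :=
          (Real.rpow_le_rpow_left_iff hq).2 h1
      _ = Real.exp (-C * ((r : ℝ) - w) ^ 2) * q ^ f y := by
          rw [Real.rpow_def_of_pos hq0, Real.rpow_def_of_pos hq0, ← Real.exp_add]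
          congr 1
          rw [hCdef]
          ring
  have hqfy : (0:ℝ) ≤ q ^ f y := Real.rpow_nonneg hq0.le _
  calc (∑ r ∈ Finset.Icc t u, q ^ f (r : ℝ))
      ≤ ∑ r ∈ Finset.Icc t u, Real.exp (-C * ((r : ℝ) - w) ^ 2) * q ^ f y :=
        Finset.sum_le_sum hterm
    _ = (∑ r ∈ Finset.Icc t u, Real.exp (-C * ((r : ℝ) - w) ^ 2)) * q ^ f y :=
        (Finset.sum_mul _ _ _).symm
    _ ≤ (∑' r : ℤ, Real.exp (-C * ((r : ℝ) - w) ^ 2)) * q ^ f y := by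
        refine mul_le_mul_of_nonneg_right ?_ hqfy
        exact Summable.sum_le_tsum _ (fun i _ => (Real.exp_pos _).le) (summable_gauss_shift C hC w)
    _ ≤ (∑' r : ℤ, Real.exp (-C * (r : ℝ) ^ 2)) * q ^ f y :=
        mul_le_mul_of_nonneg_right (theta_le C hC w) hqfy
    _ = (∑' r : ℤ, (q ^ a) ^ (-((r : ℝ) ^ 2))) * q ^ f y := by
        congr 1
        refine tsum_congr fun n => ?_
        rw [Real.rpow_def_of_pos (Real.rpow_pos_of_pos hq0 a), Real.log_rpow hq0]
        congr 1
        rw [hCdef]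
        ring
end
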